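/- arXiv:1911.10710 — 5 statements merged into one kernel-verified Lean document; each statement's English description precedes it below -/
import Mathlib

section
/- Let d, n be positive integers and let C = (d + δ_ij) be the n×n integer matrix with diagonal entries d+1 and off-diagonal entries d. If Q is an (n+d)×n integer matrix with no zero row satisfying Qᵀ·Q = C, then every row of Q is of the form ±(0,…,0,1,…,1,0,…,0), i.e. plus or minus the indicator vector of an interval of consecutive coordinates. -/
open Matrix Finset

namespace Stmt0Aux

variable {N n : ℕ} {q : Fin N → Fin n → ℤ} {D : ℤ}

lemma exists_ne_fin {n : ℕ} (hn : 2 ≤ n) (p : Fin n) : ∃ k : Fin n, k ≠ p := by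
  refine ⟨⟨if p.1 = 0 then 1 else 0, by split <;> omega⟩, ?_⟩
  intro h
  have := congrArg Fin.val h
  simp only at this
  split at this <;> omega

lemma exists_ne_ne_fin {n : ℕ} (hn : 3 ≤ n) (a b : Fin n) :
    ∃ c : Fin n, c ≠ a ∧ c ≠ b := by
  refine ⟨⟨if a.1 = 0 ∨ b.1 = 0 then (if a.1 = 1 ∨ b.1 = 1 then 2 else 1) else 0,
    by split <;> [skip; omega] <;> split <;> omega⟩, ?_, ?_⟩ <;>
  · intro h
    have := congrArg Fin.val h
    simp only at this
    split at this <;> first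
      | omega
      | (split at this <;> omega)

lemma two_elems {n : ℕ} (hn : n < 3) {j k l : Fin n} (hjk : j ≠ k) (hlj : l ≠ j)
    (hlk : l ≠ k) : False := by
  have h1 : j.1 ≠ k.1 := fun h => hjk (Fin.ext h)
  have h2 : l.1 ≠ j.1 := fun h => hlj (Fin.ext h)
  have h3 : l.1 ≠ k.1 := fun h => hlk (Fin.ext h)
  have := j.2; have := k.2; have := l.2
  omega


lemma sum_sq_diff (hsum : ∀ j k, ∑ i, q i j * q i k = D + if j = k then 1 else 0)
    {j k : Fin n} (hjk : j ≠ k) : ∑ i, (q i j - q i k)^2 = 2 := by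
  have e : ∀ i : Fin N, (q i j - q i k)^2
      = q i j * q i j - q i j * q i k - q i k * q i j + q i k * q i k := fun i => by ring
  have hjj : ∑ i, q i j * q i j = D + 1 := by rw [hsum j j]; simp
  have hkk : ∑ i, q i k * q i k = D + 1 := by rw [hsum k k]; simp
  have hjk1 : ∑ i, q i j * q i k = D := by rw [hsum j k]; simp [hjk]
  have hkj1 : ∑ i, q i k * q i j = D := by rw [hsum k j]; simp [hjk.symm]
  rw [Finset.sum_congr rfl (fun i _ => e i)]
  rw [Finset.sum_add_distrib, Finset.sum_sub_distrib, Finset.sum_sub_distrib]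
  rw [hjj, hkk, hjk1, hkj1]
  ring

lemma sum_self_sub (hsum : ∀ j k, ∑ i, q i j * q i k = D + if j = k then 1 else 0)
    {j k : Fin n} (hjk : j ≠ k) : ∑ i, q i j * (q i j - q i k) = 1 := by
  have e : ∀ i : Fin N, q i j * (q i j - q i k)
      = q i j * q i j - q i j * q i k := fun i => by ring
  have hjj : ∑ i, q i j * q i j = D + 1 := by rw [hsum j j]; simp
  have hjk1 : ∑ i, q i j * q i k = D := by rw [hsum j k]; simp [hjk]
  rw [Finset.sum_congr rfl (fun i _ => e i), Finset.sum_sub_distrib, hjj, hjk1]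
  ring

lemma diff_le (hsum : ∀ j k, ∑ i, q i j * q i k = D + if j = k then 1 else 0)
    (i : Fin N) (j k : Fin n) : q i j ≤ q i k + 1 := by
  rcases eq_or_ne j k with rfl | hjk
  · omega
  · have h2 := sum_sq_diff hsum hjk
    have h1 : (q i j - q i k)^2 ≤ 2 := by
      calc (q i j - q i k)^2 ≤ ∑ i, (q i j - q i k)^2 :=
        Finset.single_le_sum (f := fun i => (q i j - q i k)^2) (fun i _ => sq_nonneg _) (mem_univ i)
      _ = 2 := h2
    nlinarith

lemma cover_exists (hsum : ∀ j k, ∑ i, q i j * q i k = D + if j = k then 1 else 0)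
    (hpos : ∀ i j, 0 ≤ q i j) {j k : Fin n} (hjk : j ≠ k) :
    ∃ a, q a j = q a k + 1 := by
  by_contra hcon
  push_neg at hcon
  have h1 := sum_self_sub hsum hjk
  have h2 : ∑ i, q i j * (q i j - q i k) ≤ 0 := by
    apply Finset.sum_nonpos
    intro i _
    have := diff_le hsum i j k
    have := hcon i
    have := hpos i j
    apply mul_nonpos_of_nonneg_of_nonpos this
    omega
  omega

lemma cover_unique (hsum : ∀ j k, ∑ i, q i j * q i k = D + if j = k then 1 else 0)
    (hpos : ∀ i j, 0 ≤ q i j) {j k : Fin n} (hjk : j ≠ k) {a b : Fin N}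
    (ha : q a j = q a k + 1) (hb : q b j = q b k + 1) : a = b := by
  by_contra hab
  have hsq := sum_sq_diff hsum hjk
  have hker : ∀ i, i ≠ a → i ≠ b → q i j = q i k := by
    have hmem : b ∈ (univ : Finset (Fin N)).erase a := by
      simp [Ne.symm hab]
    have e1 : ∑ i ∈ (univ : Finset (Fin N)).erase a, (q i j - q i k)^2
        + (q a j - q a k)^2 = 2 := by
      rw [Finset.sum_erase_add _ _ (mem_univ a)]; exact hsq
    have e2 : ∑ i ∈ ((univ : Finset (Fin N)).erase a).erase b, (q i j - q i k)^2
        + (q b j - q b k)^2 = ∑ i ∈ (univ : Finset (Fin N)).erase a, (q i j - q i k)^2 := by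
      rw [Finset.sum_erase_add _ _ hmem]
    have hA : (q a j - q a k)^2 = 1 := by rw [ha]; ring
    have hB : (q b j - q b k)^2 = 1 := by rw [hb]; ring
    have hz : ∑ i ∈ ((univ : Finset (Fin N)).erase a).erase b, (q i j - q i k)^2 = 0 := by
      omega
    intro i hia hib
    have hi : i ∈ ((univ : Finset (Fin N)).erase a).erase b := by simp [hia, hib]
    have := (Finset.sum_eq_zero_iff_of_nonneg (fun i _ => sq_nonneg _)).1 hz i hi
    have : q i j - q i k = 0 := by
      exact pow_eq_zero_iff (by norm_num) |>.1 this
    omega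
  -- now the k-column sum
  have h1 : ∑ i, q i k * (q i k - q i j) = 1 := by
    have := sum_self_sub hsum hjk.symm
    exact this
  have e1 : ∑ i ∈ (univ : Finset (Fin N)).erase a, q i k * (q i k - q i j)
      + q a k * (q a k - q a j) = 1 := by
    rw [Finset.sum_erase_add _ _ (mem_univ a)]; exact h1
  have hmem : b ∈ (univ : Finset (Fin N)).erase a := by simp [Ne.symm hab]
  have e2 : ∑ i ∈ ((univ : Finset (Fin N)).erase a).erase b, q i k * (q i k - q i j)
      + q b k * (q b k - q b j) = ∑ i ∈ (univ : Finset (Fin N)).erase a, q i k * (q i k - q i j) := by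
    rw [Finset.sum_erase_add _ _ hmem]
  have hz : ∑ i ∈ ((univ : Finset (Fin N)).erase a).erase b, q i k * (q i k - q i j) = 0 := by
    apply Finset.sum_eq_zero
    intro i hi
    simp only [Finset.mem_erase] at hi
    have := hker i hi.2.1 hi.1
    rw [this]; ring
  have hak := hpos a k
  have hbk := hpos b k
  have ta : q a k * (q a k - q a j) = -q a k := by rw [ha]; ring
  have tb : q b k * (q b k - q b j) = -q b k := by rw [hb]; ring
  omega


/-- Peak: the entry at `p` is one more than all other entries. -/
def Peak (q : Fin N → Fin n → ℤ) (i : Fin N) (p : Fin n) : Prop :=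
  ∀ l, l ≠ p → q i p = q i l + 1

/-- Valley: the entry at `v` is one less than all other entries. -/
def Valley (q : Fin N → Fin n → ℤ) (i : Fin N) (v : Fin n) : Prop :=
  ∀ l, l ≠ v → q i l = q i v + 1

lemma claimA (hsum : ∀ j k, ∑ i, q i j * q i k = D + if j = k then 1 else 0)
    (hpos : ∀ i j, 0 ≤ q i j) {i : Fin N} {j j' k k' : Fin n}
    (hjj' : j' ≠ j) (hkk' : k' ≠ k)
    (h1 : q i j = q i k + 1) (h2 : q i j' = q i j) (h3 : q i k' = q i k) :
    False := by
  have hjk : j ≠ k := fun h => by rw [h] at h1; omega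
  have hj'k : j' ≠ k := fun h => by rw [h] at h2; omega
  have hjk' : j ≠ k' := fun h => by rw [← h] at h3; omega
  have hj'k' : j' ≠ k' := fun h => by rw [h] at h2; omega
  obtain ⟨c, hc⟩ := cover_exists hsum hpos hjj'   -- q c j' = q c j + 1
  obtain ⟨e, he⟩ := cover_exists hsum hpos hkk'.symm  -- q e k = q e k' + 1
  -- c covers (k, j)
  have hck : q c k = q c j + 1 := by
    have hub := diff_le hsum c k j
    have hlb := diff_le hsum c j' k
    -- q c k ∈ {q c j, q c j + 1}
    rcases (by omega : q c k = q c j ∨ q c k = q c j + 1) with hckj | hckj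
    · -- c covers (j', k), as does i : contradiction
      have hcov : q c j' = q c k + 1 := by omega
      have hicov : q i j' = q i k + 1 := by omega
      have : c = i := cover_unique hsum hpos hj'k hcov hicov
      rw [this] at hc; omega
    · exact hckj
  -- e covers (k, j)
  have hej : q e k = q e j + 1 := by
    have hub := diff_le hsum e j k
    have hlb := diff_le hsum e k j
    rcases (by omega : q e j = q e k + 1 ∨ q e j = q e k ∨ q e k = q e j + 1) with h | h | h
    · have : e = i := cover_unique hsum hpos hjk h h1
      rw [this] at he; omega
    · have hcov : q e j = q e k' + 1 := by omega
      have hicov : q i j = q i k' + 1 := by omega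
      have : e = i := cover_unique hsum hpos hjk' hcov hicov
      rw [this] at he; omega
    · exact h
  have hce : c = e := cover_unique hsum hpos hjk.symm hck hej
  subst hce
  -- c covers (j', k')
  have hcov : q c j' = q c k' + 1 := by omega
  have hicov : q i j' = q i k' + 1 := by omega
  have : c = i := cover_unique hsum hpos hj'k' hcov hicov
  rw [this] at he; omega

lemma rowShape_aux (hsum : ∀ j k, ∑ i, q i j * q i k = D + if j = k then 1 else 0)
    (hpos : ∀ i j, 0 ≤ q i j) {i : Fin N} {j k : Fin n}
    (h1 : q i j = q i k + 1) :
    (∃ p, Peak q i p) ∨ (∃ v, Valley q i v) := by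
  by_cases hS : ∃ j', j' ≠ j ∧ q i j' = q i j
  · by_cases hZ : ∃ k', k' ≠ k ∧ q i k' = q i k
    · obtain ⟨j', hj'1, hj'2⟩ := hS
      obtain ⟨k', hk'1, hk'2⟩ := hZ
      exact absurd (claimA hsum hpos hj'1 hk'1 h1 hj'2 hk'2) (fun h => h)
    · push_neg at hZ
      right
      refine ⟨k, fun l hl => ?_⟩
      have e1 := diff_le hsum i l k
      have e2 := diff_le hsum i k l
      have e3 := diff_le hsum i j l
      have e4 := hZ l hl
      omega
  · push_neg at hS
    left
    refine ⟨j, fun l hl => ?_⟩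
    have e1 := diff_le hsum i l k
    have e2 := diff_le hsum i j l
    have e3 := hS l hl
    omega

lemma rowShape (hsum : ∀ j k, ∑ i, q i j * q i k = D + if j = k then 1 else 0)
    (hpos : ∀ i j, 0 ≤ q i j) {i : Fin N} {j k : Fin n}
    (hne : q i j ≠ q i k) :
    (∃ p, Peak q i p) ∨ (∃ v, Valley q i v) := by
  have e1 := diff_le hsum i j k
  have e2 := diff_le hsum i k j
  rcases (by omega : q i j = q i k + 1 ∨ q i k = q i j + 1) with h | h
  · exact rowShape_aux hsum hpos h
  · exact rowShape_aux hsum hpos h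


lemma peak_pos_unique {i : Fin N} {p p' : Fin n} (h : Peak q i p) (h' : Peak q i p') :
    p = p' := by
  by_contra hne
  have e1 := h p' (Ne.symm hne)
  have e2 := h' p hne
  omega

lemma valley_pos_unique {i : Fin N} {v v' : Fin n} (h : Valley q i v) (h' : Valley q i v') :
    v = v' := by
  by_contra hne
  have e1 := h v' (Ne.symm hne)
  have e2 := h' v hne
  omega

lemma peak_row_unique (hn2 : 2 ≤ n)
    (hsum : ∀ j k, ∑ i, q i j * q i k = D + if j = k then 1 else 0)
    (hpos : ∀ i j, 0 ≤ q i j) {a b : Fin N} {p : Fin n}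
    (ha : Peak q a p) (hb : Peak q b p) : a = b := by
  obtain ⟨k, hk⟩ := exists_ne_fin hn2 p
  exact cover_unique hsum hpos (Ne.symm hk) (ha k hk) (hb k hk)

lemma valley_row_unique (hn2 : 2 ≤ n)
    (hsum : ∀ j k, ∑ i, q i j * q i k = D + if j = k then 1 else 0)
    (hpos : ∀ i j, 0 ≤ q i j) {a b : Fin N} {v : Fin n}
    (ha : Valley q a v) (hb : Valley q b v) : a = b := by
  obtain ⟨l, hl⟩ := exists_ne_fin hn2 v
  exact cover_unique hsum hpos hl (ha l hl) (hb l hl)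

lemma peak_valley_ne (hn3 : 3 ≤ n)
    (hsum : ∀ j k, ∑ i, q i j * q i k = D + if j = k then 1 else 0)
    (hpos : ∀ i j, 0 ≤ q i j) {a c : Fin N} {p v : Fin n}
    (hp : Peak q a p) (hv : Valley q c v) (hpv : p ≠ v) : False := by
  rcases eq_or_ne a c with rfl | hac
  · obtain ⟨l, hl1, hl2⟩ := exists_ne_ne_fin hn3 p v
    have e1 := hp l hl1
    have e2 := hv l hl2
    have e3 := hp v (Ne.symm hpv)
    omega
  · have h1 : q a p = q a v + 1 := hp v (Ne.symm hpv)
    have h2 : q c p = q c v + 1 := hv p hpv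
    exact hac (cover_unique hsum hpos hpv h1 h2)

lemma peak_valley (hn3 : 3 ≤ n)
    (hsum : ∀ j k, ∑ i, q i j * q i k = D + if j = k then 1 else 0)
    (hpos : ∀ i j, 0 ≤ q i j) {a c : Fin N} {p v : Fin n}
    (hp : Peak q a p) (hv : Valley q c v) : False := by
  rcases eq_or_ne p v with rfl | hpv
  · obtain ⟨l, hl⟩ := exists_ne_fin (by omega) p
    obtain ⟨l', hl'1, hl'2⟩ := exists_ne_ne_fin hn3 p l
    have hll' : l ≠ l' := Ne.symm hl'2
    obtain ⟨e, he⟩ := cover_exists hsum hpos hll'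
    rcases rowShape hsum hpos (show q e l ≠ q e l' by omega) with ⟨p', hp'⟩ | ⟨v', hv'⟩
    · have hpl : p' = l := by
        by_contra hne
        by_cases h2 : p' = l'
        · subst h2
          have := hp' l (Ne.symm hne)
          omega
        · have e1 := hp' l (fun hh => hne hh.symm)
          have e2 := hp' l' (fun hh => h2 hh.symm)
          omega
      subst hpl
      exact peak_valley_ne hn3 hsum hpos hp' hv hl
    · have hvl : v' = l' := by
        by_contra hne
        by_cases h2 : v' = l
        · subst h2
          have := hv' l' (fun hh => hll' hh.symm)
          omega
        · have e1 := hv' l (fun hh => h2 hh.symm)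
          have e2 := hv' l' (fun hh => hne hh.symm)
          omega
      subst hvl
      exact peak_valley_ne hn3 hsum hpos hp hv' (Ne.symm hl'1)
  · exact peak_valley_ne hn3 hsum hpos hp hv hpv

lemma peak_of_cover (hn2 : 2 ≤ n)
    (hsum : ∀ j k, ∑ i, q i j * q i k = D + if j = k then 1 else 0)
    (hpos : ∀ i j, 0 ≤ q i j) (hpk : ∃ a p, Peak q a p) {j k : Fin n} {c : Fin N}
    (hjk : j ≠ k) (hc : q c j = q c k + 1) : Peak q c j := by
  rcases rowShape hsum hpos (show q c j ≠ q c k by omega) with ⟨p, hp⟩ | ⟨v, hv⟩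
  · have hpj : p = j := by
      by_contra hne
      by_cases h2 : p = k
      · subst h2
        have := hp j hjk
        omega
      · have e1 := hp j (fun hh => hne hh.symm)
        have e2 := hp k (fun hh => h2 hh.symm)
        omega
    subst hpj
    exact hp
  · rcases lt_or_ge n 3 with hn3 | hn3
    · intro l hl
      have hlk : l = k := by
        by_contra hlk
        exact two_elems hn3 hjk hl hlk
      subst hlk
      exact hc
    · obtain ⟨a, p, hp⟩ := hpk
      exact absurd (peak_valley hn3 hsum hpos hp hv) id

lemma valley_of_cover
    (hsum : ∀ j k, ∑ i, q i j * q i k = D + if j = k then 1 else 0)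
    (hpos : ∀ i j, 0 ≤ q i j) (hnopk : ¬ ∃ a p, Peak q a p) {j k : Fin n} {c : Fin N}
    (hjk : j ≠ k) (hc : q c j = q c k + 1) : Valley q c k := by
  rcases rowShape hsum hpos (show q c j ≠ q c k by omega) with ⟨p, hp⟩ | ⟨v, hv⟩
  · exact absurd ⟨c, p, hp⟩ hnopk
  · have hvk : v = k := by
      by_contra hne
      by_cases h2 : v = j
      · subst h2
        have := hv k (Ne.symm hjk)
        omega
      · have e1 := hv j (fun hh => h2 hh.symm)
        have e2 := hv k (fun hh => hne hh.symm)
        omega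
    subst hvk
    exact hv


lemma all_one {α : Type*} [DecidableEq α] {s : Finset α} {f : α → ℤ}
    (h1 : ∀ i ∈ s, 1 ≤ f i) (h2 : ∑ i ∈ s, f i ≤ (s.card : ℤ)) :
    ∀ i ∈ s, f i = 1 := by
  intro a ha
  by_contra hne
  have h2' : (2:ℤ) ≤ f a := by have := h1 a ha; omega
  have hlow : ((s.erase a).card : ℤ) * 1 ≤ ∑ i ∈ s.erase a, f i := by
    have := Finset.card_nsmul_le_sum (s.erase a) f 1
      (fun i hi => h1 i (Finset.mem_of_mem_erase hi))
    simpa [nsmul_eq_mul] using this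
  have hsum := Finset.sum_erase_add s f ha
  have hc : (s.erase a).card = s.card - 1 := Finset.card_erase_of_mem ha
  have hcpos : 1 ≤ s.card := Finset.card_pos.2 ⟨a, ha⟩
  rw [hc] at hlow
  have : ((s.card - 1 : ℕ) : ℤ) = (s.card : ℤ) - 1 := by
    push_cast [hcpos]
    ring
  omega

lemma one_le_mul_self {x : ℤ} (h : 1 ≤ x) : 1 ≤ x * x := by nlinarith

lemma eq_one_of_mul_self {x : ℤ} (h : 1 ≤ x) (h2 : x * x = 1) : x = 1 := by nlinarith

lemma mainLemma (d n : ℕ) (hn : 0 < n) (q : Fin (n+d) → Fin n → ℤ)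
    (hsum : ∀ j k, ∑ i, q i j * q i k = (d:ℤ) + if j = k then 1 else 0)
    (h0 : ∀ i, ∃ j, q i j ≠ 0) (hpos : ∀ i j, 0 ≤ q i j) :
    ∀ i, (∀ j, q i j = 1) ∨ ∃ p : Fin n, q i p = 1 ∧ ∀ l, l ≠ p → q i l = 0 := by
  rcases Nat.lt_or_ge n 2 with hn2 | hn2
  · -- n = 1
    intro i
    left
    have hone : ∀ j : Fin n, j = ⟨0, hn⟩ := fun j => Fin.ext (by omega)
    have h1 : ∀ i', (1:ℤ) ≤ q i' ⟨0, hn⟩ := by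
      intro i'
      obtain ⟨j, hj⟩ := h0 i'
      rw [hone j] at hj
      have := hpos i' ⟨0, hn⟩
      omega
    have hcol : ∑ i', q i' ⟨0, hn⟩ * q i' ⟨0, hn⟩ = (d:ℤ) + 1 := by
      rw [hsum ⟨0, hn⟩ ⟨0, hn⟩]; simp
    have hall := all_one (s := (univ : Finset (Fin (n+d))))
      (f := fun i' => q i' ⟨0, hn⟩ * q i' ⟨0, hn⟩)
      (fun i' _ => one_le_mul_self (h1 i')) (by
        rw [hcol, card_univ, Fintype.card_fin]
        have : n = 1 := by omega
        push_cast [this]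
        omega)
    intro j
    rw [hone j]
    exact eq_one_of_mul_self (h1 i) (hall i (mem_univ i))
  · -- n ≥ 2
    by_cases hpk : ∃ a p, Peak q a p
    · -- peak case
      have hPco : ∀ {j k : Fin n} {c}, j ≠ k → q c j = q c k + 1 → Peak q c j :=
        fun hjk hc => peak_of_cover hn2 hsum hpos hpk hjk hc
      have hexp : ∀ p : Fin n, ∃ c, Peak q c p := by
        intro p
        obtain ⟨k, hk⟩ := exists_ne_fin hn2 p
        obtain ⟨c, hc⟩ := cover_exists hsum hpos (Ne.symm hk)
        exact ⟨c, hPco (Ne.symm hk) hc⟩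
      choose σ hσ using hexp
      have hinj : Function.Injective σ := by
        intro p p' h
        exact peak_pos_unique (h ▸ hσ p) (hσ p')
      have hclass : ∀ i, (∃ p, i = σ p) ∨ (∀ j k, q i j = q i k) := by
        intro i
        by_cases hc : ∀ j k, q i j = q i k
        · exact Or.inr hc
        · left
          push_neg at hc
          obtain ⟨j, k, hjk⟩ := hc
          have hne : j ≠ k := fun hh => hjk (by rw [hh])
          have e1 := diff_le hsum i j k
          have e2 := diff_le hsum i k j
          rcases (by omega : q i j = q i k + 1 ∨ q i k = q i j + 1) with h | h
          · exact ⟨j, peak_row_unique hn2 hsum hpos (hPco hne h) (hσ j)⟩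
          · exact ⟨k, peak_row_unique hn2 hsum hpos (hPco (Ne.symm hne) h) (hσ k)⟩
      set T : Finset (Fin (n+d)) := Finset.image σ univ with hT
      have hTcard : T.card = n := by
        rw [hT, Finset.card_image_of_injective _ hinj, card_univ, Fintype.card_fin]
      have hTccard : Tᶜ.card = d := by
        rw [Finset.card_compl, hTcard, Fintype.card_fin]
        omega
      have hnotT : ∀ i ∈ Tᶜ, ∀ p, i ≠ σ p := by
        intro i hi p hip
        rw [Finset.mem_compl, hT] at hi
        exact hi (hip ▸ Finset.mem_image_of_mem σ (mem_univ p))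
      have hconst : ∀ i ∈ Tᶜ, ∀ j, (1:ℤ) ≤ q i j := by
        intro i hi j
        rcases hclass i with ⟨p, hp⟩ | h
        · exact absurd hp (hnotT i hi p)
        · obtain ⟨j₀, hj₀⟩ := h0 i
          have := hpos i j₀
          have := h j j₀
          omega
      have key : ∀ j : Fin n, q (σ j) j = 1 ∧ (∀ p, p ≠ j → q (σ p) j = 0) ∧
          (∀ i ∈ Tᶜ, q i j = 1) := by
        intro j
        have hcol : ∑ i, q i j * q i j = (d:ℤ) + 1 := by rw [hsum j j]; simp
        have hsplit : ∑ i ∈ T, q i j * q i j + ∑ i ∈ Tᶜ, q i j * q i j = (d:ℤ) + 1 := by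
          rw [Finset.sum_add_sum_compl]; exact hcol
        have hTsum : ∑ i ∈ T, q i j * q i j = ∑ p : Fin n, q (σ p) j * q (σ p) j := by
          rw [hT]
          exact Finset.sum_image (fun x _ y _ h => hinj h)
        have hTsplit : ∑ p ∈ univ.erase j, q (σ p) j * q (σ p) j
            + q (σ j) j * q (σ j) j = ∑ p : Fin n, q (σ p) j * q (σ p) j :=
          Finset.sum_erase_add _ _ (mem_univ j)
        have hjj1 : (1:ℤ) ≤ q (σ j) j := by
          obtain ⟨l, hl⟩ := exists_ne_fin hn2 j
          have := hσ j l hl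
          have := hpos (σ j) l
          omega
        have hb1 : (1:ℤ) ≤ q (σ j) j * q (σ j) j := by nlinarith
        have hb2 : (0:ℤ) ≤ ∑ p ∈ univ.erase j, q (σ p) j * q (σ p) j :=
          Finset.sum_nonneg (fun p _ => mul_self_nonneg _)
        have hb3 : (d:ℤ) ≤ ∑ i ∈ Tᶜ, q i j * q i j := by
          have := Finset.card_nsmul_le_sum Tᶜ (fun i => q i j * q i j) 1
            (fun i hi => one_le_mul_self (hconst i hi j))
          rw [hTccard] at this
          simpa [nsmul_eq_mul] using this
        have hz : ∑ p ∈ univ.erase j, q (σ p) j * q (σ p) j = 0 := by omega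
        have htop : q (σ j) j * q (σ j) j = 1 := by omega
        have hcompl : ∑ i ∈ Tᶜ, q i j * q i j = (d:ℤ) := by omega
        refine ⟨by nlinarith, ?_, ?_⟩
        · intro p hp
          have := (Finset.sum_eq_zero_iff_of_nonneg
            (fun p _ => mul_self_nonneg (q (σ p) j))).1 hz p (by simp [hp])
          exact mul_self_eq_zero.1 this
        · intro i hi
          exact eq_one_of_mul_self (hconst i hi j)
            (all_one (s := Tᶜ) (f := fun i => q i j * q i j)
              (fun i hi => one_le_mul_self (hconst i hi j))
              (by rw [hcompl, hTccard]) i hi)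
      intro i
      rcases hclass i with ⟨p, rfl⟩ | hcst
      · right
        exact ⟨p, (key p).1, fun l hl => (key l).2.1 p (Ne.symm hl)⟩
      · left
        intro j
        have hi : i ∈ Tᶜ := by
          rw [Finset.mem_compl, hT]
          intro him
          obtain ⟨p, _, hp⟩ := Finset.mem_image.1 him
          obtain ⟨l, hl⟩ := exists_ne_fin hn2 p
          have h1 := hσ p l hl
          rw [hp] at h1
          have h2 := hcst p l
          omega
        exact (key j).2.2 i hi
    · -- no peaks : contradiction
      exfalso
      have hVco : ∀ {j k : Fin n} {c}, j ≠ k → q c j = q c k + 1 → Valley q c k :=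
        fun hjk hc => valley_of_cover hsum hpos hpk hjk hc
      have hj0k0 : (⟨0, by omega⟩ : Fin n) ≠ ⟨1, by omega⟩ := by
        intro h
        have := congrArg Fin.val h
        simp at this
      rcases Nat.lt_or_ge n 3 with hn3 | hn3
      · -- n = 2 : a valley is also a peak
        obtain ⟨c, hc⟩ := cover_exists hsum hpos hj0k0
        refine hpk ⟨c, ⟨0, by omega⟩, fun l hl => ?_⟩
        have hlk : l = ⟨1, by omega⟩ := by
          by_contra hlk
          exact two_elems hn3 hj0k0 hl hlk
        rw [hlk]
        exact hc
      · have hexv : ∀ v : Fin n, ∃ c, Valley q c v := by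
          intro v
          obtain ⟨l, hl⟩ := exists_ne_fin hn2 v
          obtain ⟨c, hc⟩ := cover_exists hsum hpos hl
          exact ⟨c, hVco hl hc⟩
        choose ζ hζ using hexv
        have hinj : Function.Injective ζ := by
          intro v v' h
          exact valley_pos_unique (h ▸ hζ v) (hζ v')
        set T : Finset (Fin (n+d)) := Finset.image ζ univ with hT
        have hTccard : Tᶜ.card = d := by
          rw [Finset.card_compl, hT, Finset.card_image_of_injective _ hinj,
            card_univ, Fintype.card_fin, Fintype.card_fin]
          omega
        have hconst : ∀ i ∈ Tᶜ, ∀ j, (1:ℤ) ≤ q i j := by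
          intro i hi j
          by_cases h : ∀ j k, q i j = q i k
          · obtain ⟨j₀, hj₀⟩ := h0 i
            have := hpos i j₀
            have := h j j₀
            omega
          · exfalso
            push_neg at h
            obtain ⟨j', k', hjk⟩ := h
            have hne : j' ≠ k' := fun hh => hjk (by rw [hh])
            have e1 := diff_le hsum i j' k'
            have e2 := diff_le hsum i k' j'
            rw [Finset.mem_compl, hT] at hi
            rcases (by omega : q i j' = q i k' + 1 ∨ q i k' = q i j' + 1) with h | h
            · have := valley_row_unique hn2 hsum hpos (hVco hne h) (hζ k')
              exact hi (this ▸ Finset.mem_image_of_mem ζ (mem_univ k'))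
            · have := valley_row_unique hn2 hsum hpos (hVco (Ne.symm hne) h) (hζ j')
              exact hi (this ▸ Finset.mem_image_of_mem ζ (mem_univ j'))
        set j0 : Fin n := ⟨0, by omega⟩ with hj0
        have hcol : ∑ i, q i j0 * q i j0 = (d:ℤ) + 1 := by rw [hsum j0 j0]; simp
        have hsplit : ∑ i ∈ T, q i j0 * q i j0 + ∑ i ∈ Tᶜ, q i j0 * q i j0 = (d:ℤ) + 1 := by
          rw [Finset.sum_add_sum_compl]; exact hcol
        have hTsum : ∑ i ∈ T, q i j0 * q i j0 = ∑ v : Fin n, q (ζ v) j0 * q (ζ v) j0 := by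
          rw [hT]
          exact Finset.sum_image (fun x _ y _ h => hinj h)
        have hTsplit : ∑ v ∈ univ.erase j0, q (ζ v) j0 * q (ζ v) j0
            + q (ζ j0) j0 * q (ζ j0) j0 = ∑ v : Fin n, q (ζ v) j0 * q (ζ v) j0 :=
          Finset.sum_erase_add _ _ (mem_univ j0)
        have hb1 : ((n:ℤ) - 1) ≤ ∑ v ∈ univ.erase j0, q (ζ v) j0 * q (ζ v) j0 := by
          have hterm : ∀ v ∈ univ.erase j0, (1:ℤ) ≤ q (ζ v) j0 * q (ζ v) j0 := by
            intro v hv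
            have hvne : j0 ≠ v := fun hh => (Finset.mem_erase.1 hv).1 hh.symm
            have e1 := hζ v j0 hvne
            have e2 := hpos (ζ v) v
            nlinarith
          have := Finset.card_nsmul_le_sum (univ.erase j0)
            (fun v => q (ζ v) j0 * q (ζ v) j0) 1 hterm
          rw [Finset.card_erase_of_mem (mem_univ j0), card_univ, Fintype.card_fin] at this
          have hcast : ((n - 1 : ℕ) : ℤ) = (n:ℤ) - 1 := by push_cast [hn]; ring
          simpa [nsmul_eq_mul, hcast] using this
        have hb2 : (0:ℤ) ≤ q (ζ j0) j0 * q (ζ j0) j0 := mul_self_nonneg _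
        have hb3 : (d:ℤ) ≤ ∑ i ∈ Tᶜ, q i j0 * q i j0 := by
          have := Finset.card_nsmul_le_sum Tᶜ (fun i => q i j0 * q i j0) 1
            (fun i hi => one_le_mul_self (hconst i hi j0))
          rw [hTccard] at this
          simpa [nsmul_eq_mul] using this
        have hn3' : (3:ℤ) ≤ (n:ℤ) := by exact_mod_cast hn3
        omega

end Stmt0Aux

open Stmt0Aux in
/-- Rows of an integer solution of `Qᵀ·Q = (d + δᵢⱼ)` are ± indicator vectors of
intervals of consecutive coordinates. -/
theorem stmt_0 (d n : ℕ) (hd : 0 < d) (hn : 0 < n)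
    (C : Matrix (Fin n) (Fin n) ℤ)
    (hC : ∀ i j, C i j = d + if i = j then 1 else 0)
    (Q : Matrix (Fin (n + d)) (Fin n) ℤ)
    (hrows : ∀ i, (fun j => Q i j) ≠ 0)
    (hQ : Qᵀ * Q = C) :
    ∀ i, ∃ ε : ℤ, (ε = 1 ∨ ε = -1) ∧ ∃ a b : ℕ, a < b ∧ b ≤ n ∧
      ∀ j : Fin n, Q i j = if a ≤ (j : ℕ) ∧ (j : ℕ) < b then ε else 0 := by
  classical
  have hsum0 : ∀ j k : Fin n, ∑ i, Q i j * Q i k = (d:ℤ) + if j = k then 1 else 0 := by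
    intro j k
    have h : (Qᵀ * Q) j k = C j k := by rw [hQ]
    rw [Matrix.mul_apply] at h
    simp only [Matrix.transpose_apply] at h
    rw [hC j k] at h
    exact h
  have h0 : ∀ i, ∃ j, Q i j ≠ 0 := by
    intro i
    by_contra h
    push_neg at h
    exact hrows i (funext h)
  set q' : Fin (n + d) → Fin n → ℤ :=
    fun i j => if ∀ l, 0 ≤ Q i l then Q i j else -Q i j with hq'
  have hprod : ∀ i j k, q' i j * q' i k = Q i j * Q i k := by
    intro i j k
    by_cases h : ∀ l, 0 ≤ Q i l <;> simp [hq', h] <;> ring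
  have hsum' : ∀ j k : Fin n, ∑ i, q' i j * q' i k = (d:ℤ) + if j = k then 1 else 0 := by
    intro j k
    rw [Finset.sum_congr rfl (fun i _ => hprod i j k)]
    exact hsum0 j k
  have hpos' : ∀ i j, 0 ≤ q' i j := by
    intro i j
    by_cases h : ∀ l, 0 ≤ Q i l
    · simpa [hq', h] using h j
    · simp only [hq', if_neg h]
      push_neg at h
      obtain ⟨l, hl⟩ := h
      have := diff_le hsum0 i j l
      omega
  have h0' : ∀ i, ∃ j, q' i j ≠ 0 := by
    intro i
    obtain ⟨j, hj⟩ := h0 i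
    refine ⟨j, ?_⟩
    by_cases h : ∀ l, 0 ≤ Q i l <;> simp [hq', h] <;> omega
  intro i
  set ε : ℤ := if ∀ l, 0 ≤ Q i l then 1 else -1 with hε
  have hQq : ∀ j, Q i j = ε * q' i j := by
    intro j
    by_cases h : ∀ l, 0 ≤ Q i l <;> simp [hq', hε, h]
  have hεs : ε = 1 ∨ ε = -1 := by
    by_cases h : ∀ l, 0 ≤ Q i l <;> simp [hε, h]
  rcases mainLemma d n hn q' hsum' h0' hpos' i with hall | ⟨p, hp1, hp0⟩
  · refine ⟨ε, hεs, 0, n, hn, le_refl n, ?_⟩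
    intro j
    have hcond : 0 ≤ (j : ℕ) ∧ (j : ℕ) < n := ⟨Nat.zero_le _, j.2⟩
    rw [if_pos hcond, hQq j, hall j, mul_one]
  · refine ⟨ε, hεs, p.1, p.1 + 1, Nat.lt_succ_self _, p.2, ?_⟩
    intro j
    by_cases hj : j = p
    · subst hj
      rw [if_pos ⟨le_refl _, Nat.lt_succ_self _⟩, hQq j, hp1, mul_one]
    · have hcond : ¬ (p.1 ≤ (j : ℕ) ∧ (j : ℕ) < p.1 + 1) := by
        intro hcc
        exact hj (Fin.ext (by omega))
      rw [if_neg hcond, hQq j, hp0 j hj, mul_zero]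
end

section
/- Let Q₁ ∈ ℤ^{k×l} and Q_* ∈ ℤ^{k×(k−l)} with Q₁ᵀQ_* = 0 and both of full column rank, let C = Q₁ᵀQ₁, C_* = Q_*ᵀQ_*, and let N be a positive integer such that N·C⁻¹ ∈ ℤ^{l×l}. Then N·Q_*·C_*⁻¹·Q_*ᵀ is an integer matrix, and each of its diagonal entries lies in {0, 1, …, N}. In particular, for every row r of Q_*, the number N·r·C_*⁻¹·rᵀ is an integer between 0 and N. -/
/-!
Let `P = Q₁C⁻¹Q₁ᵀ` and `P_* = Q_*C_*⁻¹Q_*ᵀ` be the orthogonal projections onto the two column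
spaces. The square matrix `[Q₁ Q_*]` has the left inverse `[C⁻¹Q₁ᵀ; C_*⁻¹Q_*ᵀ]` because
`Q₁ᵀQ_* = 0`, hence also this right inverse, which reads `P + P_* = 1`. So
`N·P_* = N·1 - Q₁(N·C⁻¹)Q₁ᵀ` is an integer matrix, and since both projections are positive
semidefinite, every diagonal entry of `P_*` lies in `[0, 1]`.
-/

open Matrix

namespace Matrix

variable {m n n₁ n₂ o R : Type*}

/-- The orthogonal projection onto the column space of `A` when `Aᵀ * A` is invertible
(and `0` otherwise, `⁻¹` being junk there). -/
noncomputable def orthProj [Fintype m] [Fintype n] [DecidableEq n] [CommRing R]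
    (A : Matrix m n R) : Matrix m m R :=
  A * (Aᵀ * A)⁻¹ * Aᵀ

theorem mul_mul_transpose_apply_self [Fintype n] [CommRing R] (X : Matrix m n R)
    (G : Matrix n n R) (i : m) : (X * G * Xᵀ) i i = X i ⬝ᵥ G *ᵥ X i := by
  rw [dotProduct_mulVec, ← mul_apply_eq_vecMul]
  rfl

theorem map_intCast_mul [Fintype n] [Ring R] (L : Matrix m n ℤ) (M : Matrix n o ℤ) :
    (L * M).map (Int.cast : ℤ → R) = L.map (Int.cast : ℤ → R) * M.map (Int.cast : ℤ → R) :=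
  Matrix.map_mul (f := Int.castRingHom R)

theorem isUnit_det_of_rank_eq_card [Fintype n] [DecidableEq n] [Field R] {M : Matrix n n R}
    (h : M.rank = Fintype.card n) : IsUnit M.det := by
  rw [← isUnit_iff_isUnit_det, ← mulVec_surjective_iff_isUnit]
  refine LinearMap.range_eq_top.mp
    (Submodule.eq_top_of_finrank_eq (S := LinearMap.range M.mulVecLin) ?_)
  rw [← rank, h, Module.finrank_fintype_fun_eq_card]

theorem isUnit_det_transpose_mul_self [Fintype m] [Fintype n] [DecidableEq n] [Field R]
    [LinearOrder R] [IsStrictOrderedRing R] {A : Matrix m n R} (h : A.rank = Fintype.card n) :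
    IsUnit (Aᵀ * A).det :=
  isUnit_det_of_rank_eq_card (by rw [rank_transpose_mul_self, h])

theorem posSemidef_orthProj [Fintype m] [Fintype n] [DecidableEq n] [CommRing R]
    [PartialOrder R] [StarRing R] [StarOrderedRing R] [TrivialStar R] (A : Matrix m n R) :
    (orthProj A).PosSemidef := by
  have := (posSemidef_conjTranspose_mul_self A).inv.mul_mul_conjTranspose_same A
  simpa only [orthProj, conjTranspose_eq_transpose_of_trivial] using this

theorem orthProj_add_orthProj_eq_one [Fintype m] [DecidableEq m] [Fintype n₁] [DecidableEq n₁]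
    [Fintype n₂] [DecidableEq n₂] [CommRing R] (e : m ≃ n₁ ⊕ n₂) {A : Matrix m n₁ R}
    {B : Matrix m n₂ R} (hAB : Aᵀ * B = 0) (hA : IsUnit (Aᵀ * A).det)
    (hB : IsUnit (Bᵀ * B).det) :
    orthProj A + orthProj B = 1 := by
  have hBA : Bᵀ * A = 0 := by
    rw [← transpose_transpose A, ← transpose_mul, hAB, transpose_zero]
  have hleft : fromRows ((Aᵀ * A)⁻¹ * Aᵀ) ((Bᵀ * B)⁻¹ * Bᵀ) * fromCols A B = 1 := by
    rw [fromRows_mul_fromCols]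
    simp only [Matrix.mul_assoc]
    rw [nonsing_inv_mul _ hA, nonsing_inv_mul _ hB, hAB, hBA, Matrix.mul_zero, Matrix.mul_zero,
      fromBlocks_one]
  have hright := (fromCols_mul_fromRows_eq_one_comm e _ _ _ _).mpr hleft
  rwa [fromCols_mul_fromRows, ← Matrix.mul_assoc, ← Matrix.mul_assoc] at hright

theorem orthProj_apply_self_le_one_of_add_eq_one [Fintype m] [DecidableEq m] [Fintype n₁]
    [DecidableEq n₁] [Fintype n₂] [DecidableEq n₂] [CommRing R] [PartialOrder R] [StarRing R]
    [StarOrderedRing R] [TrivialStar R] {A : Matrix m n₁ R} {B : Matrix m n₂ R}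
    (h : orthProj A + orthProj B = 1) (i : m) : orthProj B i i ≤ 1 := by
  rw [eq_sub_of_add_eq' h, sub_apply, one_apply_eq, sub_le_self_iff]
  exact (posSemidef_orthProj A).diag_nonneg

theorem natCast_smul_eq_map_of_orthProj_add_eq_one [Fintype m] [DecidableEq m] [Fintype n]
    [DecidableEq n] [CommRing R] (Q : Matrix m n ℤ) (D : Matrix n n ℤ) (N : ℕ)
    (hD : D.map (Int.cast : ℤ → R) =
      (N : R) • ((Q.map (Int.cast : ℤ → R))ᵀ * Q.map (Int.cast : ℤ → R))⁻¹)
    {P : Matrix m m R} (hP : orthProj (Q.map (Int.cast : ℤ → R)) + P = 1) :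
    (N : R) • P = ((N : ℤ) • 1 - Q * D * Qᵀ).map Int.cast := by
  rw [eq_sub_of_add_eq' hP, orthProj, smul_sub, Matrix.map_sub _ Int.cast_sub,
    map_intCast_mul (Q * D), map_intCast_mul Q D, hD, ← transpose_map]
  simp only [Matrix.mul_smul, Matrix.smul_mul]
  congr 1
  ext i j
  simp [one_apply, natCast_apply]

end Matrix

theorem stmt_6_general (k l : ℕ) (hl : l ≤ k)
    (Q₁ : Matrix (Fin k) (Fin l) ℤ) (Q₂ : Matrix (Fin k) (Fin (k - l)) ℤ)
    (horth : Q₁ᵀ * Q₂ = 0)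
    (hr₁ : (Q₁.map (Int.cast : ℤ → ℚ)).rank = l)
    (hr₂ : (Q₂.map (Int.cast : ℤ → ℚ)).rank = k - l)
    (N : ℕ)
    (hint : ∀ i j, ∃ z : ℤ,
      (N : ℚ) * (((Q₁ᵀ * Q₁).map (Int.cast : ℤ → ℚ))⁻¹ i j) = z) :
    (∀ i j, ∃ z : ℤ,
      (N : ℚ) * ((Q₂.map (Int.cast : ℤ → ℚ) *
        ((Q₂ᵀ * Q₂).map (Int.cast : ℤ → ℚ))⁻¹ *
        (Q₂.map (Int.cast : ℤ → ℚ))ᵀ) i j) = z) ∧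
    ∀ i, ∃ z : ℤ,
      (N : ℚ) * dotProduct (fun j => (Q₂ i j : ℚ))
        (((Q₂ᵀ * Q₂).map (Int.cast : ℤ → ℚ))⁻¹.mulVec fun j => (Q₂ i j : ℚ)) = z ∧
      0 ≤ z ∧ z ≤ N := by
  set A := Q₁.map (Int.cast : ℤ → ℚ)
  set B := Q₂.map (Int.cast : ℤ → ℚ)
  have hC₁ : (Q₁ᵀ * Q₁).map (Int.cast : ℤ → ℚ) = Aᵀ * A := map_intCast_mul _ _
  have hC₂ : (Q₂ᵀ * Q₂).map (Int.cast : ℤ → ℚ) = Bᵀ * B := map_intCast_mul _ _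
  have hAB : Aᵀ * B = 0 := (map_intCast_mul Q₁ᵀ Q₂).symm.trans (by rw [horth]; simp)
  have hsum : orthProj A + orthProj B = 1 :=
    orthProj_add_orthProj_eq_one (finCongr (by omega) |>.trans finSumFinEquiv.symm) hAB
      (isUnit_det_transpose_mul_self (by rw [hr₁, Fintype.card_fin]))
      (isUnit_det_transpose_mul_self (by rw [hr₂, Fintype.card_fin]))
  choose D hD using hint
  obtain ⟨Z, hZ⟩ : ∃ Z : Matrix (Fin k) (Fin k) ℤ, ∀ i j, (N : ℚ) * orthProj B i j = Z i j := by
    refine ⟨_, congrFun₂ (natCast_smul_eq_map_of_orthProj_add_eq_one Q₁ (of D) N ?_ hsum)⟩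
    ext i j
    rw [map_apply, of_apply, ← hD, hC₁]
    rfl
  rw [hC₂]
  refine ⟨fun i j => ⟨Z i j, hZ i j⟩, fun i => ⟨Z i i, ?_, ?_, ?_⟩⟩
  · have hdiag := hZ i i
    rwa [orthProj, mul_mul_transpose_apply_self] at hdiag
  · have hnonneg : (0 : ℚ) ≤ Z i i :=
      hZ i i ▸ mul_nonneg N.cast_nonneg (posSemidef_orthProj B).diag_nonneg
    exact_mod_cast hnonneg
  · have hle : (Z i i : ℚ) ≤ N :=
      hZ i i ▸ mul_le_of_le_one_right N.cast_nonneg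
        (orthProj_apply_self_le_one_of_add_eq_one hsum i)
    exact_mod_cast hle

/-- If `Q₁ᵀQ₂ = 0`, both matrices have full column rank, `C = Q₁ᵀQ₁`, `C₂ = Q₂ᵀQ₂` and
`N·C⁻¹` is integral, then `N·Q₂C₂⁻¹Q₂ᵀ` is an integer matrix whose diagonal entries lie
in `{0, 1, …, N}`; in particular for every row `r` of `Q₂`, `N·r·C₂⁻¹·rᵀ` is an integer
between `0` and `N`. -/
theorem stmt_6 (k l : ℕ) (hl : l ≤ k)
    (Q₁ : Matrix (Fin k) (Fin l) ℤ) (Q₂ : Matrix (Fin k) (Fin (k - l)) ℤ)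
    (horth : Q₁ᵀ * Q₂ = 0)
    (hr₁ : (Q₁.map (Int.cast : ℤ → ℚ)).rank = l)
    (hr₂ : (Q₂.map (Int.cast : ℤ → ℚ)).rank = k - l)
    (N : ℕ) (hN : 0 < N)
    (hint : ∀ i j, ∃ z : ℤ,
      (N : ℚ) * (((Q₁ᵀ * Q₁).map (Int.cast : ℤ → ℚ))⁻¹ i j) = z) :
    (∀ i j, ∃ z : ℤ,
      (N : ℚ) * ((Q₂.map (Int.cast : ℤ → ℚ) *
        ((Q₂ᵀ * Q₂).map (Int.cast : ℤ → ℚ))⁻¹ *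
        (Q₂.map (Int.cast : ℤ → ℚ))ᵀ) i j) = z) ∧
    ∀ i, ∃ z : ℤ,
      (N : ℚ) * dotProduct (fun j => (Q₂ i j : ℚ))
        (((Q₂ᵀ * Q₂).map (Int.cast : ℤ → ℚ))⁻¹.mulVec fun j => (Q₂ i j : ℚ)) = z ∧
      0 ≤ z ∧ z ≤ N :=
  stmt_6_general k l hl Q₁ Q₂ horth hr₁ hr₂ N hint
end

section
/- Let d ≥ 2 and n ≥ 2, and let C = (d + δ_ij) ∈ ℤ^{n×n}. Then the group Aut(C) = {A ∈ GL(n, ℤ) : Aᵀ·C·A = C} consists exactly of the matrices ±P where P ranges over the n×n permutation matrices; in particular Aut(C) ≅ S_n × Z/2. -/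
/-!
Write `C = d J + 1` with `J` the all-ones matrix and put `B = Aᵀ`, so that `B C Bᵀ = C`. A row `b`
of `B` with sum `s` satisfies `d s² + ‖b‖² = d + 1`, hence either `s = ±1` and `b = s eᵢ`, or
`s = 0`. A zero-sum row would have inner product `d` with a row `±eᵢ`, i.e. an entry `±d`, whose
square `d² > d + 1 = ‖b‖²` is too large; so one vanishing row sum forces all of them to vanish,
and then `B` kills the all-ones vector, contradicting unimodularity. For rows `sⱼ e_{π j}` the
off-diagonal equations `d sⱼ sₖ + ⟨bⱼ, bₖ⟩ = d` force all signs to agree and `π` to be injective.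
-/

open Matrix

section

variable {κ : Type*} [Fintype κ] [DecidableEq κ]

theorem Int.exists_eq_pi_single_of_dotProduct_self_eq_one {x : κ → ℤ} (hx : x ⬝ᵥ x = 1) :
    ∃ i, x = Pi.single i (x i) := by
  obtain ⟨i, hi⟩ : ∃ i, x i ≠ 0 := by
    by_contra! h
    simp [dotProduct, h] at hx
  refine ⟨i, funext fun j => ?_⟩
  rcases eq_or_ne j i with rfl | hji
  · simp
  rw [Pi.single_eq_of_ne hji]
  have hxi : 0 < x i * x i := mul_self_pos.mpr hi
  have hrest : ∑ j ∈ Finset.univ.erase i, x j * x j = 0 := by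
    have hsplit := Finset.add_sum_erase Finset.univ (fun j => x j * x j) (Finset.mem_univ i)
    have hnonneg : 0 ≤ ∑ j ∈ Finset.univ.erase i, x j * x j :=
      Finset.sum_nonneg fun _ _ => mul_self_nonneg _
    simp only [dotProduct] at hx
    omega
  exact mul_self_eq_zero.mp <| (Finset.sum_eq_zero_iff_of_nonneg
    (fun _ _ => mul_self_nonneg _)).mp hrest j (by simp [hji])

theorem exists_eq_pi_single_of_dotProduct_one_ne_zero {d : ℤ} (hd : 2 ≤ d) {x : κ → ℤ}
    (hx : d * (x ⬝ᵥ 1) * (x ⬝ᵥ 1) + x ⬝ᵥ x = d + 1) (hs : x ⬝ᵥ 1 ≠ 0) :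
    (x ⬝ᵥ 1 = 1 ∨ x ⬝ᵥ 1 = -1) ∧ ∃ i, x = Pi.single i (x ⬝ᵥ 1) := by
  have hss : 0 < (x ⬝ᵥ 1) * (x ⬝ᵥ 1) := mul_self_pos.mpr hs
  have hxx : 0 ≤ x ⬝ᵥ x := Finset.sum_nonneg fun _ _ => mul_self_nonneg _
  have hss' : (x ⬝ᵥ 1) * (x ⬝ᵥ 1) = 1 := by nlinarith
  obtain ⟨i, hi⟩ := Int.exists_eq_pi_single_of_dotProduct_self_eq_one (x := x) (by nlinarith)
  refine ⟨mul_self_eq_one_iff.mp hss', i, ?_⟩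
  rw [hi, single_dotProduct, Pi.one_apply, mul_one, ← hi]

theorem eq_and_ne_of_mul_add_dotProduct_pi_single_eq {d : ℤ} (hd : 0 < d) {a b : κ} {ε η : ℤ}
    (hε : ε = 1 ∨ ε = -1) (hη : η = 1 ∨ η = -1)
    (h : d * ε * η + Pi.single a ε ⬝ᵥ Pi.single b η = d) : ε = η ∧ a ≠ b := by
  rw [single_dotProduct, Pi.single_apply] at h
  rcases hε with rfl | rfl <;> rcases hη with rfl | rfl <;> by_cases hab : a = b <;>
    simp [hab] at h ⊢ <;> omega

end

section

variable {m n R : Type*} [Fintype n] [CommRing R]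

theorem mul_vecMulVec_mul_transpose (B : Matrix m n R) (u v : n → R) :
    B * vecMulVec u v * Bᵀ = vecMulVec (B *ᵥ u) (B *ᵥ v) := by
  rw [mul_vecMulVec, vecMulVec_mul, vecMul_transpose]

theorem mul_smul_vecMulVec_one_add_one_mul_transpose [DecidableEq n] (B : Matrix m n R) (d : R) :
    B * (d • vecMulVec 1 1 + 1 : Matrix n n R) * Bᵀ =
      d • vecMulVec (B *ᵥ 1) (B *ᵥ 1) + B * Bᵀ := by
  rw [Matrix.mul_add, Matrix.add_mul, Matrix.mul_smul, Matrix.smul_mul,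
    mul_vecMulVec_mul_transpose, Matrix.mul_one]

end

section

variable {ι : Type*} [Fintype ι] [DecidableEq ι] {d : ℤ} {B : Matrix ι ι ℤ}

theorem mulVec_one_mul_add_dotProduct_of_mul_mul_transpose_eq
    (hB : B * (d • vecMulVec 1 1 + 1 : Matrix ι ι ℤ) * Bᵀ = d • vecMulVec 1 1 + 1) (j k : ι) :
    d * (B *ᵥ 1) j * (B *ᵥ 1) k + B j ⬝ᵥ B k = d + if j = k then 1 else 0 := by
  have := congrFun₂ hB j k
  rw [mul_smul_vecMulVec_one_add_one_mul_transpose] at this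
  simpa only [Matrix.add_apply, Matrix.smul_apply, mul_apply', transpose_apply, vecMulVec_apply,
    one_apply, Pi.one_apply, smul_eq_mul, mul_one, mul_assoc] using this

theorem exists_row_eq_pi_single (hd : 2 ≤ d)
    (hB : B * (d • vecMulVec 1 1 + 1 : Matrix ι ι ℤ) * Bᵀ = d • vecMulVec 1 1 + 1) {j : ι}
    (hj : (B *ᵥ 1) j ≠ 0) :
    ((B *ᵥ 1) j = 1 ∨ (B *ᵥ 1) j = -1) ∧ ∃ i, B j = Pi.single i ((B *ᵥ 1) j) := by
  have hjj := mulVec_one_mul_add_dotProduct_of_mul_mul_transpose_eq hB j j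
  rw [if_pos rfl] at hjj
  exact exists_eq_pi_single_of_dotProduct_one_ne_zero hd hjj hj

theorem mulVec_one_eq_zero_of_apply_eq_zero (hd : 2 ≤ d)
    (hB : B * (d • vecMulVec 1 1 + 1 : Matrix ι ι ℤ) * Bᵀ = d • vecMulVec 1 1 + 1) {j : ι}
    (hj : (B *ᵥ 1) j = 0) : B *ᵥ 1 = 0 := by
  funext k
  by_contra hk
  obtain ⟨hsign, i, hBk⟩ := exists_row_eq_pi_single hd hB hk
  have hjk : j ≠ k := by rintro rfl; exact hk hj
  have hjj := mulVec_one_mul_add_dotProduct_of_mul_mul_transpose_eq hB j j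
  have hjk' := mulVec_one_mul_add_dotProduct_of_mul_mul_transpose_eq hB j k
  rw [if_pos rfl, hj] at hjj
  rw [if_neg hjk, hj, hBk, dotProduct_single] at hjk'
  have hBji : B j i * B j i ≤ B j ⬝ᵥ B j :=
    Finset.single_le_sum (f := fun i => B j i * B j i) (fun _ _ => mul_self_nonneg _)
      (Finset.mem_univ i)
  rcases hsign with h | h <;> rw [h] at hjk' <;> nlinarith

theorem mulVec_one_apply_ne_zero (hd : 2 ≤ d) (hdet : IsUnit B.det)
    (hB : B * (d • vecMulVec 1 1 + 1 : Matrix ι ι ℤ) * Bᵀ = d • vecMulVec 1 1 + 1) (j : ι) :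
    (B *ᵥ 1) j ≠ 0 := by
  intro hj
  have : Nonempty ι := ⟨j⟩
  have hdet0 : B.det = 0 :=
    exists_mulVec_eq_zero_iff.mp ⟨1, one_ne_zero, mulVec_one_eq_zero_of_apply_eq_zero hd hB hj⟩
  simp [hdet0] at hdet

theorem exists_eq_smul_permMatrix_of_mul_mul_transpose_eq (hd : 2 ≤ d) (hdet : IsUnit B.det)
    (hB : B * (d • vecMulVec 1 1 + 1 : Matrix ι ι ℤ) * Bᵀ = d • vecMulVec 1 1 + 1) :
    ∃ σ : Equiv.Perm ι, ∃ ε : ℤ, (ε = 1 ∨ ε = -1) ∧ B = ε • σ.permMatrix ℤ := by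
  choose hsign π hπ using fun j =>
    exists_row_eq_pi_single hd hB (mulVec_one_apply_ne_zero hd hdet hB j)
  have hoff : ∀ j k, j ≠ k → (B *ᵥ 1) j = (B *ᵥ 1) k ∧ π j ≠ π k := fun j k hjk => by
    have h := mulVec_one_mul_add_dotProduct_of_mul_mul_transpose_eq hB j k
    rw [if_neg hjk, add_zero, hπ j, hπ k] at h
    exact eq_and_ne_of_mul_add_dotProduct_pi_single_eq (by omega) (hsign j) (hsign k) h
  obtain ⟨ε, hε, hsε⟩ : ∃ ε : ℤ, (ε = 1 ∨ ε = -1) ∧ ∀ j, (B *ᵥ 1) j = ε := by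
    rcases isEmpty_or_nonempty ι with _ | ⟨⟨j₀⟩⟩
    · exact ⟨1, Or.inl rfl, isEmptyElim⟩
    refine ⟨(B *ᵥ 1) j₀, hsign j₀, fun j => ?_⟩
    rcases eq_or_ne j j₀ with rfl | hj
    exacts [rfl, (hoff j j₀ hj).1]
  have hπinj : Function.Injective π := fun j k h => by
    by_contra hjk
    exact (hoff j k hjk).2 h
  refine ⟨Equiv.ofBijective π hπinj.bijective_of_finite, ε, hε, ?_⟩
  ext j i
  rw [hπ j, hsε]
  simp [Equiv.Perm.permMatrix, PEquiv.toMatrix_apply, Pi.single_apply, eq_comm]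

end

section

variable {ι R : Type*} [Fintype ι] [DecidableEq ι] [CommRing R]

theorem isUnit_det_smul_permMatrix {ε : R} (hε : IsUnit ε) (σ : Equiv.Perm ι) :
    IsUnit (ε • σ.permMatrix R).det := by
  rw [det_smul, det_permutation]
  exact (hε.pow _).mul ((Equiv.Perm.sign σ).isUnit.map (Int.castRingHom R))

theorem smul_permMatrix_mul_mul_transpose {ε : R} (hε : ε * ε = 1) (σ : Equiv.Perm ι) (d : R) :
    (ε • σ.permMatrix R) * (d • vecMulVec 1 1 + 1 : Matrix ι ι R) * (ε • σ.permMatrix R)ᵀ =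
      d • vecMulVec 1 1 + 1 := by
  rw [mul_smul_vecMulVec_one_add_one_mul_transpose, smul_mulVec, permMatrix_mulVec,
    Pi.one_comp, transpose_smul, transpose_permMatrix, Matrix.smul_mul, Matrix.mul_smul,
    smul_smul, hε, one_smul, ← permMatrix_mul, inv_mul_cancel, permMatrix_one, smul_vecMulVec,
    vecMulVec_smul, smul_smul, smul_smul, mul_assoc, hε, mul_one]

end

theorem stmt_14_general (d n : ℕ) (hd : 2 ≤ d)
    (C : Matrix (Fin n) (Fin n) ℤ)
    (hC : ∀ i j, C i j = d + if i = j then 1 else 0) :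
    ∀ A : Matrix (Fin n) (Fin n) ℤ,
      (IsUnit A.det ∧ Aᵀ * C * A = C) ↔
      ∃ σ : Equiv.Perm (Fin n), ∃ ε : ℤ, (ε = 1 ∨ ε = -1) ∧
        A = ε • σ.permMatrix ℤ := by
  obtain rfl : C = (d : ℤ) • vecMulVec 1 1 + 1 := by
    ext i j
    simp only [hC, Matrix.add_apply, Matrix.smul_apply, vecMulVec_apply, Pi.one_apply, one_apply,
      mul_one, smul_eq_mul]
  intro A
  constructor
  · rintro ⟨hdet, hA⟩
    obtain ⟨σ, ε, hε, hAσ⟩ := exists_eq_smul_permMatrix_of_mul_mul_transpose_eq (B := Aᵀ)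
      (by exact_mod_cast hd : (2 : ℤ) ≤ d) (by rwa [det_transpose]) (by rwa [transpose_transpose])
    refine ⟨σ⁻¹, ε, hε, ?_⟩
    rw [← transpose_transpose A, hAσ, transpose_smul, transpose_permMatrix]
  · rintro ⟨σ, ε, hε, rfl⟩
    have hε' : IsUnit ε := Int.isUnit_iff.mpr hε
    refine ⟨isUnit_det_smul_permMatrix hε' σ, ?_⟩
    convert smul_permMatrix_mul_mul_transpose (Int.isUnit_mul_self hε') σ⁻¹ (d : ℤ) using 2
    · rw [transpose_smul, transpose_permMatrix]
    · rw [transpose_smul, transpose_permMatrix, inv_inv]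

/-- For `d ≥ 2`, `n ≥ 2` and `C = (d + δᵢⱼ)`, the automorphism group
`{A ∈ GL(n,ℤ) : AᵀCA = C}` consists exactly of the signed permutation matrices `±P`. -/
theorem stmt_14 (d n : ℕ) (hd : 2 ≤ d) (hn : 2 ≤ n)
    (C : Matrix (Fin n) (Fin n) ℤ)
    (hC : ∀ i j, C i j = d + if i = j then 1 else 0) :
    ∀ A : Matrix (Fin n) (Fin n) ℤ,
      (IsUnit A.det ∧ Aᵀ * C * A = C) ↔
      ∃ σ : Equiv.Perm (Fin n), ∃ ε : ℤ, (ε = 1 ∨ ε = -1) ∧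
        A = ε • σ.permMatrix ℤ :=
  stmt_14_general d n hd C hC
end

section
/- Let n ≥ 2 and C = (1 + δ_ij) ∈ ℤ^{n×n} (diagonal entries 2, off-diagonal entries 1). Then the group Aut(C) = {A ∈ GL(n, ℤ) : AᵀCA = C} is isomorphic to S_{n+1} × Z/2. Concretely, with Q the (n+1)×n matrix whose first n rows form the identity and whose last row is (−1,…,−1), the map sending a signed permutation matrix ±P ∈ GL(n+1, ℤ) (P a permutation matrix) to the unique A with Q·A = ±P·Q is an isomorphism from {±P : P ∈ S_{n+1}} onto Aut(C). -/
open Matrix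

/-! The columns `e_j - e_n` of `Q` form a basis of the root lattice
`A_n = {v ∈ ℤ^{n+1} : ∑ vᵢ = 0}` and `C = QᵀQ` is its Gram matrix. If `AᵀCA = C`, the columns
of `B = QA` are sum-zero integer vectors of norm 2, hence roots `e_a - e_b`, and their pairwise
inner products are 1, so any two of them share exactly one endpoint, in the same position. For
`n ≥ 2` this forces all columns to share one endpoint `t`, so `B = ±PQ` for the permutation
sending `e_n` to `e_t`. Conversely `±PQ` has sum-zero columns and Gram matrix `C`, so it is
`QA` for an automorphism `A`. Uniqueness holds because for `n ≥ 2` no two rows of `Q`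
(`e_j` and `-(1,…,1)`) are equal up to sign. -/

namespace RootLatticeA

lemma exists_apply_eq_one_of_sum_eq_zero {ι : Type*} [Fintype ι] {v : ι → ℤ}
    (hsum : ∑ i, v i = 0) (hv : v ⬝ᵥ v = 2) : ∃ a, v a = 1 := by
  by_contra! hne
  have hsq : ∀ i, v i * v i ≤ 2 := fun i => hv ▸
    Finset.single_le_sum (f := fun j => v j * v j) (fun j _ => mul_self_nonneg (v j))
      (Finset.mem_univ i)
  have hnonpos : ∀ i ∈ Finset.univ, v i ≤ 0 := fun i _ => by
    by_contra! hpos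
    have : 2 ≤ v i := by have := hne i; omega
    nlinarith [hsq i]
  have hzero : v = 0 := funext fun i =>
    (Finset.sum_eq_zero_iff_of_nonpos hnonpos).mp hsum i (Finset.mem_univ i)
  simp [hzero] at hv

section Roots

variable {ι : Type*} [DecidableEq ι]

def root (a b : ι) : ι → ℤ := Pi.single a 1 - Pi.single b 1

lemma root_swap (a b : ι) : root a b = -root b a := by
  simp [root]

lemma root_apply_symm (σ : Equiv.Perm ι) (a b i : ι) :
    root a b (σ.symm i) = root (σ a) (σ b) i := by
  simp [root, Pi.single_apply, Equiv.symm_apply_eq]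

variable [Fintype ι]

lemma sum_root (a b : ι) : ∑ i, root a b i = 0 := by
  simp [root]

lemma root_dotProduct_root (a b c d : ι) :
    root a b ⬝ᵥ root c d = (if a = c then 1 else 0) - (if a = d then 1 else 0)
      - (if b = c then 1 else 0) + (if b = d then 1 else 0) := by
  simp only [root, sub_dotProduct, dotProduct_sub, single_dotProduct, Pi.single_apply, one_mul]
  ring

lemma root_dotProduct_self {a b : ι} (hab : a ≠ b) : root a b ⬝ᵥ root a b = 2 := by
  rw [root_dotProduct_root, if_neg hab, if_neg hab.symm]
  norm_num

lemma eq_and_ne_or_ne_and_eq_of_root_dotProduct_root_eq_one {a b c d : ι}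
    (h : root a b ⬝ᵥ root c d = 1) : a = c ∧ b ≠ d ∨ a ≠ c ∧ b = d := by
  rw [root_dotProduct_root] at h
  split_ifs at h <;> subst_vars <;> simp_all

lemma exists_eq_root {v : ι → ℤ} (hsum : ∑ i, v i = 0) (hv : v ⬝ᵥ v = 2) :
    ∃ a b, a ≠ b ∧ v = root a b := by
  obtain ⟨a, ha⟩ := exists_apply_eq_one_of_sum_eq_zero hsum hv
  obtain ⟨b, hb⟩ :=
    exists_apply_eq_one_of_sum_eq_zero (v := -v) (by simp [hsum]) (by simpa using hv)
  have hab : a ≠ b := by rintro rfl; simp at hb; omega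
  refine ⟨a, b, hab, ?_⟩
  have hvr : v ⬝ᵥ root a b = 2 := by
    simp only [root, dotProduct_sub, dotProduct_single, ha]
    simp only [Pi.neg_apply] at hb
    omega
  -- `‖v - root a b‖² = 2 - 2 * 2 + 2`
  have : (v - root a b) ⬝ᵥ (v - root a b) = 0 := by
    simp only [sub_dotProduct, dotProduct_sub, hv, hvr, dotProduct_comm (root a b) v,
      root_dotProduct_self hab]
    norm_num
  exact sub_eq_zero.mp (dotProduct_self_eq_zero.mp this)

end Roots

lemma forall_eq_and_injective_of_pairwise {ι α : Type*} {a b : ι → α} {i₀ i₁ : ι}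
    (h01 : i₀ ≠ i₁) (ha : a i₀ = a i₁)
    (h : ∀ j k, j ≠ k → a j = a k ∧ b j ≠ b k ∨ a j ≠ a k ∧ b j = b k) :
    (∀ j, a j = a i₀) ∧ Function.Injective b := by
  have hb : b i₀ ≠ b i₁ := by
    rcases h i₀ i₁ h01 with ⟨_, hb⟩ | ⟨ha', _⟩
    exacts [hb, absurd ha ha']
  have hconst : ∀ j, a j = a i₀ := by
    intro j
    by_contra hj
    have hj₀ : b j = b i₀ := by
      rcases h j i₀ (by rintro rfl; exact hj rfl) with ⟨h', _⟩ | ⟨_, h'⟩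
      exacts [absurd h' hj, h']
    have hj₁ : b j = b i₁ := by
      rcases h j i₁ (by rintro rfl; exact hj ha.symm) with ⟨h', _⟩ | ⟨_, h'⟩
      exacts [absurd (h'.trans ha.symm) hj, h']
    exact hb (hj₀.symm.trans hj₁)
  refine ⟨hconst, fun j k hbjk => ?_⟩
  by_contra hjk
  rcases h j k hjk with ⟨_, h'⟩ | ⟨h', _⟩
  exacts [h' hbjk, h' ((hconst j).trans (hconst k).symm)]

lemma exists_const_and_injective_of_pairwise {ι α : Type*} [Nontrivial ι] {a b : ι → α}
    (h : ∀ j k, j ≠ k → a j = a k ∧ b j ≠ b k ∨ a j ≠ a k ∧ b j = b k) :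
    (∃ t, (∀ j, a j = t) ∧ Function.Injective b) ∨
      (∃ t, (∀ j, b j = t) ∧ Function.Injective a) := by
  obtain ⟨i₀, i₁, h01⟩ := exists_pair_ne ι
  by_cases ha : a i₀ = a i₁
  · exact Or.inl ⟨_, forall_eq_and_injective_of_pairwise h01 ha h⟩
  · have hb : b i₀ = b i₁ := by
      rcases h i₀ i₁ h01 with ⟨h', _⟩ | ⟨_, h'⟩
      exacts [absurd h' ha, h']
    exact Or.inr ⟨_, forall_eq_and_injective_of_pairwise h01 hb
      fun j k hjk => (h j k hjk).symm.imp And.symm And.symm⟩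

lemma isUnit_det_of_transpose_mul_mul_eq {R ι : Type*} [CommRing R] [IsDomain R] [Fintype ι]
    [DecidableEq ι] {A C : Matrix ι ι R} (hC : C.det ≠ 0) (h : Aᵀ * C * A = C) :
    IsUnit A.det := by
  have hdet := congrArg det h
  rw [det_mul, det_mul, det_transpose] at hdet
  refine IsUnit.of_mul_eq_one A.det (mul_right_cancel₀ hC ?_)
  linear_combination hdet

lemma one_vecMul_smul_permMatrix_mul {R ι m : Type*} [CommRing R] [Fintype ι] [DecidableEq ι]
    [Fintype m] (ε : R) (σ : Equiv.Perm ι) {M : Matrix ι m R} (hM : 1 ᵥ* M = 0) :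
    1 ᵥ* (ε • σ.permMatrix R * M) = 0 := by
  rw [← vecMul_vecMul, vecMul_smul, vecMul_permMatrix, Pi.one_comp, smul_vecMul, hM,
    smul_zero]

lemma transpose_mul_self_smul_permMatrix_mul {R ι m : Type*} [CommRing R] [Fintype ι]
    [DecidableEq ι] {ε : R} (hε : ε * ε = 1) (σ : Equiv.Perm ι) (M : Matrix ι m R) :
    (ε • σ.permMatrix R * M)ᵀ * (ε • σ.permMatrix R * M) = Mᵀ * M := by
  rw [smul_mul, transpose_smul, Matrix.mul_smul, Matrix.smul_mul, smul_smul, hε, one_smul,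
    Equiv.Perm.permMatrix, PEquiv.toMatrix_toPEquiv_mul, transpose_submatrix,
    submatrix_mul_equiv]
  rfl

lemma smul_permMatrix_mul_apply {R ι m : Type*} [CommSemiring R] [Fintype ι] [DecidableEq ι]
    (ε : R) (σ : Equiv.Perm ι) (M : Matrix ι m R) (i : ι) :
    (ε • σ.permMatrix R * M) i = ε • M (σ i) := by
  rw [smul_mul, Equiv.Perm.permMatrix, PEquiv.toMatrix_toPEquiv_mul]
  rfl

section RootBasis

variable {n : ℕ}

/-- The matrix `Q` of the statement. -/
def rootBasis (n : ℕ) : Matrix (Fin (n + 1)) (Fin n) ℤ :=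
  of fun i j => root (Fin.castSucc j) (Fin.last n) i

lemma rootBasis_apply (i : Fin (n + 1)) (j : Fin n) :
    rootBasis n i j = if (i : ℕ) = (j : ℕ) then 1 else if (i : ℕ) = n then -1 else 0 := by
  simp only [rootBasis, of_apply, root, Pi.sub_apply, Pi.single_apply, Fin.ext_iff,
    Fin.val_castSucc, Fin.val_last]
  have := j.isLt
  split_ifs <;> omega

lemma transpose_rootBasis_mul_rootBasis_apply (j k : Fin n) :
    ((rootBasis n)ᵀ * rootBasis n) j k = 1 + if j = k then 1 else 0 := by
  rw [mul_apply']
  change root _ _ ⬝ᵥ root _ _ = _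
  rw [root_dotProduct_root]
  simp [Fin.castSucc_ne_last, (Fin.castSucc_ne_last _).symm, eq_comm]
  ring

lemma rootBasis_castSucc (j : Fin n) : rootBasis n (Fin.castSucc j) = Pi.single j 1 := by
  ext k
  simp [rootBasis, root, Pi.single_apply, Fin.castSucc_ne_last, eq_comm]

lemma rootBasis_last : rootBasis n (Fin.last n) = -1 := by
  ext k
  simp [rootBasis, root, Pi.single_apply, (Fin.castSucc_ne_last _).symm]

lemma one_vecMul_rootBasis : (1 : Fin (n + 1) → ℤ) ᵥ* rootBasis n = 0 := by
  ext k
  simpa [vecMul, dotProduct, rootBasis] using sum_root (Fin.castSucc k) (Fin.last n)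

lemma rootBasis_mul_castSucc (M : Matrix (Fin n) (Fin n) ℤ) (j : Fin n) :
    (rootBasis n * M) (Fin.castSucc j) = M j := by
  ext k
  simp [mul_apply, rootBasis_castSucc, Pi.single_apply]

lemma rootBasis_mul_injective :
    Function.Injective (rootBasis n * · : Matrix (Fin n) (Fin n) ℤ → _) :=
  fun M M' h => funext fun j => by
    rw [← rootBasis_mul_castSucc M, ← rootBasis_mul_castSucc M']
    exact congrFun h _

lemma eq_rootBasis_mul_of_one_vecMul_eq_zero {B : Matrix (Fin (n + 1)) (Fin n) ℤ}
    (hB : 1 ᵥ* B = 0) : B = rootBasis n * B.submatrix Fin.castSucc id := by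
  ext i k
  induction i using Fin.lastCases with
  | last =>
    have hsum := congrFun hB k
    simp only [vecMul, dotProduct, Pi.one_apply, one_mul, Fin.sum_univ_castSucc,
      Pi.zero_apply] at hsum
    simp only [mul_apply, rootBasis_last, Pi.neg_apply, Pi.one_apply, neg_one_mul,
      Finset.sum_neg_distrib, submatrix_apply, id]
    linarith
  | cast j => rw [rootBasis_mul_castSucc]; rfl

lemma det_transpose_rootBasis_mul_rootBasis :
    ((rootBasis n)ᵀ * rootBasis n).det = n + 1 := by
  have h : (rootBasis n)ᵀ * rootBasis n =
      1 + replicateCol Unit (fun _ : Fin n => (1 : ℤ)) *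
        replicateRow Unit (fun _ : Fin n => (1 : ℤ)) := by
    ext j k
    rw [transpose_rootBasis_mul_rootBasis_apply, Matrix.add_apply, one_apply]
    simp [mul_apply, add_comm]
  rw [h, det_one_add_replicateCol_mul_replicateRow]
  simp [dotProduct, add_comm]

end RootBasis

section SignedPerm

variable {n : ℕ}

lemma exists_perm_castSucc_last {c : Fin n → Fin (n + 1)} (hc : Function.Injective c)
    {t : Fin (n + 1)} (ht : t ∉ Set.range c) :
    ∃ σ : Equiv.Perm (Fin (n + 1)), (∀ k, σ (Fin.castSucc k) = c k) ∧ σ (Fin.last n) = t := by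
  have hinj : Function.Injective (Fin.snoc c t : Fin (n + 1) → Fin (n + 1)) :=
    Fin.snoc_injective_iff.mpr ⟨hc, ht⟩
  exact ⟨Equiv.ofBijective _ hinj.bijective_of_finite, fun k => by simp, by simp⟩

lemma exists_eq_smul_permMatrix_mul_rootBasis {ε : ℤ} {c : Fin n → Fin (n + 1)}
    (hc : Function.Injective c) {t : Fin (n + 1)} (ht : t ∉ Set.range c)
    {B : Matrix (Fin (n + 1)) (Fin n) ℤ} (hB : ∀ k, Bᵀ k = ε • root (c k) t) :
    ∃ σ : Equiv.Perm (Fin (n + 1)), B = ε • σ.permMatrix ℤ * rootBasis n := by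
  obtain ⟨σ, hσc, hσt⟩ := exists_perm_castSucc_last hc ht
  refine ⟨σ.symm, ?_⟩
  ext i k
  rw [smul_permMatrix_mul_apply, ← transpose_apply B, hB]
  simp [rootBasis, root_apply_symm, hσc, hσt]

lemma exists_eq_smul_permMatrix_mul_rootBasis_of_gram (hn : 2 ≤ n)
    {B : Matrix (Fin (n + 1)) (Fin n) ℤ} (hsum : 1 ᵥ* B = 0)
    (hgram : Bᵀ * B = (rootBasis n)ᵀ * rootBasis n) :
    ∃ σ : Equiv.Perm (Fin (n + 1)), ∃ ε : ℤ, (ε = 1 ∨ ε = -1) ∧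
      B = ε • σ.permMatrix ℤ * rootBasis n := by
  have hdot : ∀ j k, Bᵀ j ⬝ᵥ Bᵀ k = 1 + if j = k then 1 else 0 := fun j k => by
    rw [← transpose_rootBasis_mul_rootBasis_apply, ← hgram, mul_apply']
    rfl
  have hcol : ∀ k, ∃ a b, a ≠ b ∧ Bᵀ k = root a b := fun k =>
    exists_eq_root (by simpa [vecMul, dotProduct] using congrFun hsum k) (by simp [hdot])
  choose a b hab hroot using hcol
  have hshare : ∀ j k, j ≠ k → a j = a k ∧ b j ≠ b k ∨ a j ≠ a k ∧ b j = b k :=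
    fun j k hjk => eq_and_ne_or_ne_and_eq_of_root_dotProduct_root_eq_one <| by
      rw [← hroot, ← hroot, hdot, if_neg hjk]; rfl
  have : Nontrivial (Fin n) := Fin.nontrivial_iff_two_le.mpr hn
  rcases exists_const_and_injective_of_pairwise hshare with ⟨t, ht, hb⟩ | ⟨t, ht, ha⟩
  · obtain ⟨σ, hσ⟩ := exists_eq_smul_permMatrix_mul_rootBasis (ε := -1) hb
      (t := t) (by rintro ⟨k, hk⟩; exact hab k ((ht k).trans hk.symm))
      (fun k => by rw [hroot, ht, root_swap, neg_one_smul])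
    exact ⟨σ, -1, Or.inr rfl, hσ⟩
  · obtain ⟨σ, hσ⟩ := exists_eq_smul_permMatrix_mul_rootBasis (ε := 1) ha
      (t := t) (by rintro ⟨k, hk⟩; exact hab k (hk.trans (ht k).symm))
      (fun k => by rw [hroot, ht, one_smul])
    exact ⟨σ, 1, Or.inl rfl, hσ⟩

lemma eq_and_eq_of_smul_rootBasis_eq (hn : 2 ≤ n) {x y : Fin (n + 1)} {ε ε' : ℤ}
    (hε : ε ≠ 0) (hε' : ε' ≠ 0) (h : ε • rootBasis n x = ε' • rootBasis n y) :
    x = y ∧ ε = ε' := by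
  have : Nontrivial (Fin n) := Fin.nontrivial_iff_two_le.mpr hn
  induction x using Fin.lastCases with
  | last =>
    induction y using Fin.lastCases with
    | last => simpa [rootBasis_last] using congrFun h (Classical.arbitrary _)
    | cast k =>
      obtain ⟨l, hl⟩ := exists_ne k
      simpa [rootBasis_last, rootBasis_castSucc, hl, hε] using congrFun h l
  | cast j =>
    induction y using Fin.lastCases with
    | last =>
      obtain ⟨l, hl⟩ := exists_ne j
      simpa [rootBasis_last, rootBasis_castSucc, hl, hε'] using congrFun h l
    | cast k =>
      have hj := congrFun h j
      by_cases hjk : j = k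
      · subst hjk
        simpa [rootBasis_castSucc] using hj
      · simp [rootBasis_castSucc, hjk, hε] at hj

lemma eq_and_eq_of_smul_permMatrix_mul_rootBasis_eq (hn : 2 ≤ n)
    {σ σ' : Equiv.Perm (Fin (n + 1))} {ε ε' : ℤ} (hε : ε ≠ 0) (hε' : ε' ≠ 0)
    (h : ε • σ.permMatrix ℤ * rootBasis n = ε' • σ'.permMatrix ℤ * rootBasis n) :
    σ = σ' ∧ ε = ε' := by
  have hrow : ∀ i, σ i = σ' i ∧ ε = ε' := fun i =>
    eq_and_eq_of_smul_rootBasis_eq hn hε hε' <| by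
      rw [← smul_permMatrix_mul_apply, ← smul_permMatrix_mul_apply, h]
  exact ⟨Equiv.ext fun i => (hrow i).1, (hrow 0).2⟩

end SignedPerm

end RootLatticeA

open RootLatticeA

/-- For `n ≥ 2` and `C = (1 + δᵢⱼ)`, with `Q` the `(n+1)×n` matrix whose first `n` rows
form the identity and whose last row is `(−1,…,−1)`: every signed permutation matrix
`±P` of size `n+1` determines a unique `A` with `Q·A = ±P·Q`, and this `A` lies in
`Aut(C) = {A ∈ GL(n,ℤ) : AᵀCA = C}`; conversely every element of `Aut(C)` arises from a
unique signed permutation in this way.  (Hence `Aut(C) ≅ S_{n+1} × Z/2`.) -/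
theorem stmt_15 (n : ℕ) (hn : 2 ≤ n)
    (C : Matrix (Fin n) (Fin n) ℤ)
    (hC : ∀ i j, C i j = 1 + if i = j then 1 else 0)
    (Q : Matrix (Fin (n + 1)) (Fin n) ℤ)
    (hQ : ∀ i j, Q i j =
      if (i : ℕ) = (j : ℕ) then 1 else if (i : ℕ) = n then -1 else 0) :
    (∀ σ : Equiv.Perm (Fin (n + 1)), ∀ ε : ℤ, (ε = 1 ∨ ε = -1) →
      ∃! A : Matrix (Fin n) (Fin n) ℤ,
        Q * A = ε • (σ.permMatrix ℤ) * Q ∧ IsUnit A.det ∧ Aᵀ * C * A = C) ∧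
    (∀ A : Matrix (Fin n) (Fin n) ℤ, IsUnit A.det → Aᵀ * C * A = C →
      ∃! p : Equiv.Perm (Fin (n + 1)) × ℤ, (p.2 = 1 ∨ p.2 = -1) ∧
        Q * A = p.2 • (p.1.permMatrix ℤ) * Q) := by
  obtain rfl : Q = rootBasis n := by ext i j; rw [hQ, rootBasis_apply]
  obtain rfl : C = (rootBasis n)ᵀ * rootBasis n := by
    ext i j; rw [hC, transpose_rootBasis_mul_rootBasis_apply]
  have hdetC : ((rootBasis n)ᵀ * rootBasis n).det ≠ 0 := by
    rw [det_transpose_rootBasis_mul_rootBasis]; positivity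
  have hgram : ∀ A, Aᵀ * ((rootBasis n)ᵀ * rootBasis n) * A =
      (rootBasis n * A)ᵀ * (rootBasis n * A) := fun A => by
    simp only [transpose_mul, Matrix.mul_assoc]
  have hsq : ∀ ε : ℤ, (ε = 1 ∨ ε = -1) → ε * ε = 1 := by rintro _ (rfl | rfl) <;> rfl
  refine ⟨fun σ ε hε => ?_, fun A _ hA => ?_⟩
  · set B := ε • σ.permMatrix ℤ * rootBasis n
    have hB : rootBasis n * B.submatrix Fin.castSucc id = B :=
      (eq_rootBasis_mul_of_one_vecMul_eq_zero
        (one_vecMul_smul_permMatrix_mul ε σ one_vecMul_rootBasis)).symm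
    have hAut : (B.submatrix Fin.castSucc id)ᵀ * ((rootBasis n)ᵀ * rootBasis n) *
        B.submatrix Fin.castSucc id = (rootBasis n)ᵀ * rootBasis n := by
      rw [hgram, hB, transpose_mul_self_smul_permMatrix_mul (hsq ε hε)]
    exact ⟨_, ⟨hB, isUnit_det_of_transpose_mul_mul_eq hdetC hAut, hAut⟩,
      fun A' hA' => rootBasis_mul_injective (hA'.1.trans hB.symm)⟩
  · have hsum : 1 ᵥ* (rootBasis n * A) = 0 := by
      rw [← vecMul_vecMul, one_vecMul_rootBasis, zero_vecMul]
    obtain ⟨σ, ε, hε, hσ⟩ :=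
      exists_eq_smul_permMatrix_mul_rootBasis_of_gram hn hsum ((hgram A).symm.trans hA)
    have hne : ∀ ε : ℤ, (ε = 1 ∨ ε = -1) → ε ≠ 0 := by rintro _ (rfl | rfl) <;> decide
    refine ⟨(σ, ε), ⟨hε, hσ⟩, fun p hp => ?_⟩
    obtain ⟨h1, h2⟩ := eq_and_eq_of_smul_permMatrix_mul_rootBasis_eq hn (hne _ hp.1)
      (hne _ hε) (hp.2.symm.trans hσ)
    exact Prod.ext h1 h2
end

section
/- Up to permuting rows and multiplying rows by −1, the only integer matrix Q ∈ ℤ^{(n+d)×n} with all rows nonzero satisfying Qᵀ·Q = (d + δ_ij)_{i,j=1}^n is the matrix whose first n rows are the standard basis vectors e₁, …, e_n and whose last d rows all equal (−1, −1, …, −1). -/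
/-!
Write `qᵢ` for the columns. Since `‖qᵢ - qⱼ‖² = 2` for `i ≠ j`, the entries of a row differ by at
most one, so after changing signs every row is nonnegative and a row with a zero entry is a
`0/1` vector. A row without zero entries contributes at least `1` to `⟨qᵢ, qⱼ⟩ = d`, so there are
at most `d` such rows; a non-constant `0/1` row contributes at least `2(n - 1)` to
`∑ₖ ∑ᵢ ∑ⱼ (Qₖᵢ - Qₖⱼ)² = 2n(n - 1)`, so at most `n` rows have a zero. As there are `n + d` rows,
both counts are sharp, and equality in `⟨qᵢ, qⱼ⟩ = d` forces the rows of the first kind to be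
all-ones and those of the second kind to be unit vectors, one for each column. For `n = 1` the
single diagonal entry `d + 1 = ∑ₖ Qₖ₁²` already forces every row to be `±1`.
-/

open Matrix Finset

lemma sum_sum_sub_sq {ι : Type*} [Fintype ι] (x : ι → ℤ) :
    ∑ i, ∑ j, (x i - x j) ^ 2 = 2 * Fintype.card ι * ∑ i, x i ^ 2 - 2 * (∑ i, x i) ^ 2 := by
  simp only [sub_sq, sum_add_distrib, sum_sub_distrib, sum_const, card_univ, nsmul_eq_mul,
    ← mul_sum, ← sum_mul, mul_assoc]
  ring

lemma two_mul_card_sub_one_le_sum_sum_sub_sq {ι : Type*} [Fintype ι] (x : ι → ℤ)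
    (hx : ∀ i, x i = 0 ∨ x i = 1) (h₀ : ∃ i, x i = 0) (h₁ : ∃ i, x i = 1) :
    2 * (Fintype.card ι - 1 : ℤ) ≤ ∑ i, ∑ j, (x i - x j) ^ 2 := by
  obtain ⟨i₀, hi₀⟩ := h₀
  obtain ⟨i₁, hi₁⟩ := h₁
  have hbin : ∀ i, 0 ≤ x i ∧ x i ≤ 1 := fun i => by rcases hx i with h | h <;> simp [h]
  have hsq : ∑ i, x i ^ 2 = ∑ i, x i :=
    sum_congr rfl fun i _ => by rcases hx i with h | h <;> simp [h]
  have hone : x i₁ ≤ ∑ i, x i := single_le_sum (fun i _ => (hbin i).1) (mem_univ i₁)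
  have hzero : 1 - x i₀ ≤ ∑ i, (1 - x i) :=
    single_le_sum (f := fun i => 1 - x i) (fun i _ => by linarith [hbin i]) (mem_univ i₀)
  simp only [sum_sub_distrib, sum_const, card_univ, nsmul_eq_mul, mul_one] at hzero
  rw [sum_sum_sub_sq, hsq]
  nlinarith [mul_nonneg (sub_nonneg.mpr (hi₁ ▸ hone)) (sub_nonneg.mpr (hi₀ ▸ hzero))]

lemma ite_exists_eq_zero_le_mul {κ ι : Type*} [Fintype ι] {P : κ → ι → ℤ} (hP : ∀ k i, 0 ≤ P k i)
    (k : κ) (i j : ι) : (if ∃ l, P k l = 0 then 0 else 1) ≤ P k i * P k j := by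
  split_ifs with hk
  · exact mul_nonneg (hP k i) (hP k j)
  · simp only [not_exists] at hk
    have hi : 1 ≤ P k i := lt_of_le_of_ne (hP k i) (Ne.symm (hk i))
    have hj : 1 ≤ P k j := lt_of_le_of_ne (hP k j) (Ne.symm (hk j))
    nlinarith

lemma sum_ite_exists_eq_zero {κ ι : Type*} [Fintype κ] [Fintype ι] (P : κ → ι → ℤ) :
    (∑ k, if ∃ l, P k l = 0 then 0 else 1 : ℤ) = #{k | ¬∃ l, P k l = 0} := by
  rw [← sum_boole]
  simp only [ite_not]

variable {κ ι : Type*} [Fintype κ] [DecidableEq ι]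

def GramEq (d : ℕ) (R : κ → ι → ℤ) : Prop :=
  ∀ i j, ∑ k, R k i * R k j = d + if i = j then 1 else 0

namespace GramEq

variable {d : ℕ} {R : κ → ι → ℤ}

lemma sum_sub_sq (h : GramEq d R) (i j : ι) :
    ∑ k, (R k i - R k j) ^ 2 = 2 - 2 * if i = j then 1 else 0 := by
  have e : ∀ k, (R k i - R k j) ^ 2 = R k i * R k i - 2 * (R k i * R k j) + R k j * R k j :=
    fun k => by ring
  rw [sum_congr rfl fun k _ => e k, sum_add_distrib, sum_sub_distrib, ← mul_sum, h, h, h,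
    if_pos rfl, if_pos rfl]
  ring

lemma sub_le_one (h : GramEq d R) (k : κ) (i j : ι) : R k i - R k j ≤ 1 := by
  have hle : (R k i - R k j) ^ 2 ≤ 2 := by
    have hsum := h.sum_sub_sq i j
    have := single_le_sum (fun l _ => sq_nonneg (R l i - R l j)) (mem_univ k)
    split_ifs at hsum <;> linarith
  nlinarith

lemma mul_sign (h : GramEq d R) {ε : κ → ℤ} (hε : ∀ k, ε k = 1 ∨ ε k = -1) :
    GramEq d fun k i => ε k * R k i := by
  intro i j
  rw [← h i j]
  refine sum_congr rfl fun k _ => ?_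
  rcases hε k with hk | hk <;> simp [hk]

lemma exists_sign_nonneg (h : GramEq d R) :
    ∃ ε : κ → ℤ, (∀ k, ε k = 1 ∨ ε k = -1) ∧ ∀ k i, 0 ≤ ε k * R k i := by
  classical
  refine ⟨fun k => if ∃ i, 0 < R k i then 1 else -1, fun k => ?_, fun k i => ?_⟩ <;>
    dsimp only <;> split_ifs with hk
  · exact .inl rfl
  · exact .inr rfl
  · obtain ⟨i₀, hi₀⟩ := hk
    have := h.sub_le_one k i₀ i
    omega
  · simp only [not_exists, not_lt] at hk
    have := hk i
    omega

lemma eq_zero_or_eq_one {P : κ → ι → ℤ} (h : GramEq d P) (hP : ∀ k i, 0 ≤ P k i) {k : κ}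
    (hk : ∃ l, P k l = 0) (i : ι) : P k i = 0 ∨ P k i = 1 := by
  obtain ⟨l, hl⟩ := hk
  have := h.sub_le_one k i l
  have := hP k i
  omega

variable [Fintype ι] {P : κ → ι → ℤ}

lemma card_filter_not_exists_eq_zero_le [Nontrivial ι] (h : GramEq d P)
    (hP : ∀ k i, 0 ≤ P k i) : #{k | ¬∃ l, P k l = 0} ≤ d := by
  obtain ⟨i, j, hij⟩ := exists_pair_ne ι
  have hle := sum_le_sum fun k (_ : k ∈ univ) => ite_exists_eq_zero_le_mul hP k i j
  rw [h i j, if_neg hij, add_zero, sum_ite_exists_eq_zero] at hle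
  exact_mod_cast hle

lemma sum_sum_sum_sub_sq (h : GramEq d P) :
    ∑ k, ∑ i, ∑ j, (P k i - P k j) ^ 2 = 2 * Fintype.card ι * (Fintype.card ι - 1) := by
  calc ∑ k, ∑ i, ∑ j, (P k i - P k j) ^ 2 = ∑ i, ∑ j, ∑ k, (P k i - P k j) ^ 2 := by
        rw [sum_comm]
        exact sum_congr rfl fun i _ => sum_comm
    _ = ∑ i : ι, ∑ j : ι, (2 - 2 * if i = j then 1 else 0) := by simp only [h.sum_sub_sq]
    _ = _ := by
        simp [sum_sub_distrib]
        ring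

lemma card_filter_exists_eq_zero_le [Nontrivial ι] (h : GramEq d P) (hP : ∀ k i, 0 ≤ P k i)
    (hrow : ∀ k, ∃ i, P k i ≠ 0) : #{k | ∃ l, P k l = 0} ≤ Fintype.card ι := by
  have hrow_le : ∀ k ∈ ({k | ∃ l, P k l = 0} : Finset κ),
      2 * (Fintype.card ι - 1 : ℤ) ≤ ∑ i, ∑ j, (P k i - P k j) ^ 2 := by
    intro k hk
    have hk := (mem_filter.mp hk).2
    obtain ⟨i, hi⟩ := hrow k
    exact two_mul_card_sub_one_le_sum_sum_sub_sq (P k) (h.eq_zero_or_eq_one hP hk) hk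
      ⟨i, (h.eq_zero_or_eq_one hP hk i).resolve_left hi⟩
  have hn : (1 : ℤ) < Fintype.card ι := by exact_mod_cast Fintype.one_lt_card
  have hmul : (#{k | ∃ l, P k l = 0} : ℤ) * (2 * (Fintype.card ι - 1)) ≤
      Fintype.card ι * (2 * (Fintype.card ι - 1)) :=
    calc _ ≤ ∑ k ∈ {k | ∃ l, P k l = 0}, ∑ i, ∑ j, (P k i - P k j) ^ 2 := by
            simpa using card_nsmul_le_sum _ _ _ hrow_le
      _ ≤ ∑ k, ∑ i, ∑ j, (P k i - P k j) ^ 2 :=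
            sum_le_sum_of_subset_of_nonneg (filter_subset _ _) fun k _ _ => by positivity
      _ = _ := by rw [h.sum_sum_sum_sub_sq]; ring
  exact_mod_cast le_of_mul_le_mul_right hmul (by linarith)

lemma mul_eq_ite (h : GramEq d P) (hP : ∀ k i, 0 ≤ P k i) (hB : #{k | ¬∃ l, P k l = 0} = d)
    {i j : ι} (hij : i ≠ j) (k : κ) : P k i * P k j = if ∃ l, P k l = 0 then 0 else 1 := by
  have hsum : ∑ k, (P k i * P k j - if ∃ l, P k l = 0 then 0 else 1) = 0 := by
    rw [sum_sub_distrib, h i j, if_neg hij, sum_ite_exists_eq_zero, hB]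
    ring
  have := (sum_eq_zero_iff_of_nonneg fun k _ =>
    sub_nonneg.mpr (ite_exists_eq_zero_le_mul hP k i j)).mp hsum k (mem_univ k)
  linarith

lemma eq_one_of_not_exists_eq_zero [Nontrivial ι] (h : GramEq d P) (hP : ∀ k i, 0 ≤ P k i)
    (hB : #{k | ¬∃ l, P k l = 0} = d) {k : κ} (hk : ¬∃ l, P k l = 0) (i : ι) : P k i = 1 := by
  obtain ⟨j, hji⟩ := exists_ne i
  have := h.mul_eq_ite hP hB hji.symm k
  rw [if_neg hk] at this
  exact Int.eq_one_of_mul_eq_one_right (hP k i) this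

lemma eq_ite_of_ne_zero (h : GramEq d P) (hP : ∀ k i, 0 ≤ P k i)
    (hB : #{k | ¬∃ l, P k l = 0} = d) {k : κ} (hk : ∃ l, P k l = 0) {i : ι} (hi : P k i ≠ 0)
    (j : ι) : P k j = if i = j then 1 else 0 := by
  have hi1 := (h.eq_zero_or_eq_one hP hk i).resolve_left hi
  split_ifs with hij
  · exact hij ▸ hi1
  · simpa [hi1, hk] using h.mul_eq_ite hP hB (Ne.symm hij) k

lemma exists_exists_eq_zero_ne_zero [Nontrivial ι] (h : GramEq d P) (hP : ∀ k i, 0 ≤ P k i)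
    (hB : #{k | ¬∃ l, P k l = 0} = d) (i : ι) : ∃ k, (∃ l, P k l = 0) ∧ P k i ≠ 0 := by
  by_contra! hzero
  have hcol : ∑ k, P k i * P k i = ∑ k, if ∃ l, P k l = 0 then 0 else 1 := by
    refine sum_congr rfl fun k _ => ?_
    by_cases hk : ∃ l, P k l = 0
    · simp [hzero k hk, hk]
    · simp [h.eq_one_of_not_exists_eq_zero hP hB hk i, hk]
  rw [h i i, if_pos rfl, sum_ite_exists_eq_zero, hB] at hcol
  omega

lemma exists_equiv_sum_of_nontrivial [Nontrivial ι] (h : GramEq d P) (hP : ∀ k i, 0 ≤ P k i)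
    (hrow : ∀ k, ∃ i, P k i ≠ 0) (hcard : Fintype.card κ = Fintype.card ι + d) :
    ∃ e : ι ⊕ Fin d ≃ κ, (∀ i j, P (e (.inl i)) j = if i = j then 1 else 0) ∧
      ∀ b j, P (e (.inr b)) j = 1 := by
  have hsplit := card_filter_add_card_filter_not (s := univ) (fun k => ∃ l, P k l = 0)
  have hS := h.card_filter_exists_eq_zero_le hP hrow
  have hB_le := h.card_filter_not_exists_eq_zero_le hP
  rw [card_univ, hcard] at hsplit
  have hB : #{k | ¬∃ l, P k l = 0} = d := by omega
  choose f hfS hf0 using h.exists_exists_eq_zero_ne_zero hP hB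
  have hf i j : P (f i) j = if i = j then 1 else 0 := h.eq_ite_of_ne_zero hP hB (hfS i) (hf0 i) j
  have hinj : Function.Injective fun i => (⟨f i, hfS i⟩ : {k // ∃ l, P k l = 0}) := by
    intro i i' hii'
    have := hf i i'
    rw [show f i = f i' from congrArg Subtype.val hii', hf i', if_pos rfl] at this
    by_contra hne
    simp [hne] at this
  let eS := Equiv.ofBijective _ ((Fintype.bijective_iff_injective_and_card _).mpr
    ⟨hinj, by rw [Fintype.card_subtype]; omega⟩)
  let eB : Fin d ≃ {k // ¬∃ l, P k l = 0} :=
    (Fintype.equivFinOfCardEq (by rw [Fintype.card_subtype, hB])).symm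
  exact ⟨(Equiv.sumCongr eS eB).trans (Equiv.sumCompl _), hf,
    fun b => h.eq_one_of_not_exists_eq_zero hP hB (eB b).2⟩

lemma eq_one_of_subsingleton [Subsingleton ι] (h : GramEq d P) (hP : ∀ k i, 0 ≤ P k i)
    (hrow : ∀ k, ∃ i, P k i ≠ 0) (hcard : Fintype.card κ = Fintype.card ι + d) (k : κ) (i : ι) :
    P k i = 1 := by
  have hone : ∀ k, 1 ≤ P k i * P k i := fun k => by
    obtain ⟨i', hi'⟩ := hrow k
    have := lt_of_le_of_ne (hP k i) (Subsingleton.elim i' i ▸ hi').symm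
    nlinarith
  have hι : Fintype.card ι = 1 := Fintype.card_eq_one_iff.mpr ⟨i, fun i' => Subsingleton.elim i' i⟩
  have hsum : ∑ k, (P k i * P k i - 1) = 0 := by
    rw [sum_sub_distrib, h i i, if_pos rfl]
    simp [hcard, hι, add_comm]
  have := (sum_eq_zero_iff_of_nonneg fun k _ => sub_nonneg.mpr (hone k)).mp hsum k (mem_univ k)
  exact Int.eq_one_of_mul_eq_one_right (hP k i) (by linarith)

theorem exists_equiv_sum (h : GramEq d P) (hP : ∀ k i, 0 ≤ P k i)
    (hrow : ∀ k, ∃ i, P k i ≠ 0) (hcard : Fintype.card κ = Fintype.card ι + d) :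
    ∃ e : ι ⊕ Fin d ≃ κ, (∀ i j, P (e (.inl i)) j = if i = j then 1 else 0) ∧
      ∀ b j, P (e (.inr b)) j = 1 := by
  rcases subsingleton_or_nontrivial ι with hι | hι
  · have hone := h.eq_one_of_subsingleton hP hrow hcard
    exact ⟨Fintype.equivOfCardEq (by simp [hcard]),
      fun i j => by rw [if_pos (Subsingleton.elim i j), hone], fun b j => hone _ j⟩
  · exact h.exists_equiv_sum_of_nontrivial hP hrow hcard

end GramEq

lemma apply_finSumFinEquiv_symm_trans {κ : Type*} {n d : ℕ} {P : κ → Fin n → ℤ}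
    (e : Fin n ⊕ Fin d ≃ κ) (he₁ : ∀ i j, P (e (.inl i)) j = if i = j then 1 else 0)
    (he₂ : ∀ b j, P (e (.inr b)) j = 1) (i : Fin (n + d)) (j : Fin n) :
    P ((finSumFinEquiv.symm.trans e) i) j =
      if (i : ℕ) = (j : ℕ) then 1 else if n ≤ (i : ℕ) then 1 else 0 := by
  induction i using Fin.addCases with
  | left i => simp [he₁, Fin.ext_iff, i.is_lt.not_ge]
  | right b => simp [he₂]

theorem stmt_16_general (d n : ℕ)
    (C : Matrix (Fin n) (Fin n) ℤ)
    (hC : ∀ i j, C i j = d + if i = j then 1 else 0)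
    (Q : Matrix (Fin (n + d)) (Fin n) ℤ)
    (hrows : ∀ i, (fun j => Q i j) ≠ 0)
    (hQ : Qᵀ * Q = C) :
    ∃ σ : Equiv.Perm (Fin (n + d)), ∃ ε : Fin (n + d) → ℤ,
      (∀ i, ε i = 1 ∨ ε i = -1) ∧
      ∀ i j, ε i * Q (σ i) j =
        if (i : ℕ) = (j : ℕ) then 1 else if n ≤ (i : ℕ) then -1 else 0 := by
  have hG : GramEq d Q := fun i j => by rw [← hC, ← hQ, mul_apply]; rfl
  obtain ⟨ε, hε, hpos⟩ := hG.exists_sign_nonneg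
  have hrow k : ∃ i, ε k * Q k i ≠ 0 := by
    obtain ⟨i, hi⟩ := Function.ne_iff.mp (hrows k)
    exact ⟨i, mul_ne_zero (by rcases hε k with h | h <;> simp [h]) hi⟩
  obtain ⟨e, he₁, he₂⟩ := (hG.mul_sign hε).exists_equiv_sum hpos hrow (by simp)
  set σ := finSumFinEquiv.symm.trans e
  refine ⟨σ, fun i => (if n ≤ (i : ℕ) then -1 else 1) * ε (σ i), fun i => ?_, fun i j => ?_⟩
  · dsimp only
    rcases hε (σ i) with h | h <;> split_ifs <;> simp [h]
  · have := apply_finSumFinEquiv_symm_trans (P := fun k i => ε k * Q k i) e he₁ he₂ i j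
    dsimp only at this ⊢
    rw [mul_assoc, this]
    have := j.isLt
    split_ifs <;> omega

/-- Up to permuting rows and changing signs of rows, the only solution of
`Qᵀ·Q = (d + δᵢⱼ)` with nonzero rows is the matrix whose first `n` rows are the standard
basis vectors and whose last `d` rows all equal `(−1,…,−1)`. -/
theorem stmt_16 (d n : ℕ) (hd : 0 < d) (hn : 0 < n)
    (C : Matrix (Fin n) (Fin n) ℤ)
    (hC : ∀ i j, C i j = d + if i = j then 1 else 0)
    (Q : Matrix (Fin (n + d)) (Fin n) ℤ)
    (hrows : ∀ i, (fun j => Q i j) ≠ 0)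
    (hQ : Qᵀ * Q = C) :
    ∃ σ : Equiv.Perm (Fin (n + d)), ∃ ε : Fin (n + d) → ℤ,
      (∀ i, ε i = 1 ∨ ε i = -1) ∧
      ∀ i j, ε i * Q (σ i) j =
        if (i : ℕ) = (j : ℕ) then 1 else if n ≤ (i : ℕ) then -1 else 0 :=
  stmt_16_general d n C hC Q hrows hQ
end
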